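/- arXiv:nlin/0609023 — 7 statements merged into one kernel-verified Lean document; each statement's English description precedes it below -/
import Mathlib

section
/- Let N, K be positive integers, ε > 0, ω > 0 and R > 0. Consider on ℓ²(ℤ^N_K) the functional E_ω[φ] = ε Σ_{ν=1}^N ‖∇ν⁺φ‖₂² + ω Σ_{‖n‖_∞ ≤ K} |φ_n|² and the constraint set B₁ = { φ ∈ ℓ²(ℤ^N_K) : Σ_{‖n‖_∞ ≤ K} log(1 + |φ_n|²) = R }. Then there exist φ̂ ∈ B₁ with E_ω[φ̂] = inf { E_ω[φ] : φ ∈ B₁ } and a real number Λ with Λ > ω, such that −ε(Δ_d φ̂)_n + ω φ̂_n = Λ φ̂_n / (1 + |φ̂_n|²) for all n with ‖n‖_∞ ≤ K (where φ̂_n = 0 for ‖n‖_∞ > K). In particular Σ_{‖n‖_∞ ≤ K} log(1 + |φ̂_n|²) = R and φ̂ ≠ 0. -/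
/-!
On functions supported in the box, the constraint set `{Σ log (1 + |φ_n|²) = R}` is nonempty and
compact (each `|φ_n|² ≤ e^R - 1`), so the continuous energy attains its minimum on it at some
`φ ≠ 0`. There the constraint has nonzero derivative, and the Lagrange multiplier rule gives
`E'(φ) = Λ G'(φ)`. Testing this against a unit vector at a site `n` and summing by parts yields the
Euler–Lagrange equation at `n`. Testing it against `φ` itself yields
`E(φ) = Λ Σ |φ_n|² / (1 + |φ_n|²)`, and `E(φ) ≥ ω Σ |φ_n|² > ω Σ |φ_n|² / (1 + |φ_n|²)`
forces `Λ > ω`.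
-/

open scoped BigOperators
noncomputable section

/-- The lattice `ℤ^N`. -/
abbrev Zn (N : ℕ) := Fin N → ℤ

/-- The ν-th standard basis vector of `ℤ^N`. -/
def evec {N : ℕ} (ν : Fin N) : Zn N := fun i => if i = ν then 1 else 0

/-- The discrete Laplacian on `ℤ^N`. -/
def dLap {N : ℕ} (φ : Zn N → ℂ) : Zn N → ℂ :=
  fun n => ∑ ν : Fin N, (φ (n + evec ν) + φ (n - evec ν) - 2 * φ n)

/-- The forward difference operator in direction ν. -/
def fdiff {N : ℕ} (ν : Fin N) (φ : Zn N → ℂ) : Zn N → ℂ :=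
  fun n => φ (n + evec ν) - φ n

/-- `n` lies in the box `‖n‖_∞ ≤ K`. -/
def inBox {N : ℕ} (K : ℕ) (n : Zn N) : Prop := ∀ i, |n i| ≤ (K : ℤ)

/-- `φ` is supported in the box `‖n‖_∞ ≤ K` (i.e. `φ ∈ ℓ²(ℤ^N_K)`). -/
def suppIn {N : ℕ} (K : ℕ) (φ : Zn N → ℂ) : Prop := ∀ n, ¬ inBox K n → φ n = 0

/-- The linear energy functional `E_ω[φ] = ε Σ_ν ‖∇ν⁺φ‖₂² + ω Σ_n |φ_n|²`. -/
def Eomega {N : ℕ} (ε ω : ℝ) (φ : Zn N → ℂ) : ℝ :=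
  ε * ∑ ν : Fin N, ∑' n, ‖fdiff ν φ n‖ ^ 2 + ω * ∑' n, ‖φ n‖ ^ 2


open Finset

section Calculus

variable {E F : Type*} [NormedAddCommGroup E] [NormedSpace ℝ E]
  [NormedAddCommGroup F] [InnerProductSpace ℝ F]

theorem hasStrictFDerivAt_sum_norm_sq_comp {ι : Type*} (s : Finset ι) (L : ι → E →L[ℝ] F)
    (v : E) :
    HasStrictFDerivAt (fun v => ∑ i ∈ s, ‖L i v‖ ^ 2)
      (∑ i ∈ s, (2 • innerSL ℝ (L i v)).comp (L i)) v :=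
  HasStrictFDerivAt.fun_sum fun i _ =>
    (hasStrictFDerivAt_norm_sq (L i v)).comp v (L i).hasStrictFDerivAt

theorem hasStrictFDerivAt_log_one_add_norm_sq (x : F) :
    HasStrictFDerivAt (fun x => Real.log (1 + ‖x‖ ^ 2))
      ((1 + ‖x‖ ^ 2)⁻¹ • 2 • innerSL ℝ x) x := by
  simpa using ((hasStrictFDerivAt_norm_sq x).const_add 1).log (by positivity)

theorem IsMinOn.exists_eq_mul_of_hasStrictFDerivAt [CompleteSpace E] {f g : E → ℝ}
    {f' g' : E →L[ℝ] ℝ} {x : E} (hmin : IsMinOn f {y | g y = g x} x)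
    (hf : HasStrictFDerivAt f f' x) (hg : HasStrictFDerivAt g g' x) (hg' : g' ≠ 0) :
    ∃ μ : ℝ, ∀ w, f' w = μ * g' w := by
  obtain ⟨a, b, hab, hcomb⟩ :=
    hmin.isExtr.localize.exists_multipliers_of_hasStrictFDerivAt_1d hg hf
  have hb : b ≠ 0 := by
    rintro rfl
    simp only [zero_smul, add_zero, smul_eq_zero, hg', or_false] at hcomb
    exact hab (by simp [hcomb])
  refine ⟨-a / b, fun w => ?_⟩
  have hw : a * g' w + b * f' w = 0 := by simpa using congr($hcomb w)
  field_simp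
  linarith

end Calculus

section LogMass

variable {ι E : Type*} [Fintype ι] [NormedAddCommGroup E]

def logMass (v : ι → E) : ℝ := ∑ i, Real.log (1 + ‖v i‖ ^ 2)

theorem continuous_logMass : Continuous (logMass : (ι → E) → ℝ) :=
  continuous_finsetSum _ fun i _ =>
    (continuous_const.add ((continuous_apply i).norm.pow 2)).log fun v =>
      (by positivity : (0 : ℝ) < 1 + ‖v i‖ ^ 2).ne'

theorem sq_norm_le_of_logMass_le {v : ι → E} {R : ℝ} (hv : logMass v ≤ R) (i : ι) :
    ‖v i‖ ^ 2 ≤ Real.exp R - 1 := by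
  have hi : Real.log (1 + ‖v i‖ ^ 2) ≤ R :=
    (single_le_sum (f := fun j => Real.log (1 + ‖v j‖ ^ 2)) (fun j _ => Real.log_nonneg (by simp))
      (mem_univ i)).trans hv
  have := (Real.log_le_iff_le_exp (by positivity)).1 hi
  linarith

theorem isCompact_logMass_eq [ProperSpace E] (R : ℝ) :
    IsCompact {v : ι → E | logMass v = R} := by
  refine (isCompact_closedBall 0 √(Real.exp R - 1)).of_isClosed_subset
    (isClosed_eq continuous_logMass continuous_const) fun v hv => ?_
  rw [mem_closedBall_zero_iff, pi_norm_le_iff_of_nonneg (Real.sqrt_nonneg _)]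
  intro i
  simpa using Real.abs_le_sqrt (sq_norm_le_of_logMass_le hv.le i)

theorem exists_logMass_eq [NormedSpace ℝ E] [Nonempty ι] [Nontrivial E] {R : ℝ} (hR : 0 ≤ R) :
    ∃ v : ι → E, logMass v = R := by
  classical
  obtain ⟨x, hx⟩ := exists_norm_eq E (Real.sqrt_nonneg (Real.exp R - 1))
  refine ⟨Pi.single (Classical.arbitrary ι) x, ?_⟩
  rw [logMass, Fintype.sum_eq_single (Classical.arbitrary ι) fun i hi => by simp [hi]]
  simp [hx, Real.sq_sqrt (by linarith [Real.add_one_le_exp R] : 0 ≤ Real.exp R - 1)]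

variable [InnerProductSpace ℝ E]

def logMassDeriv (v : ι → E) : (ι → E) →L[ℝ] ℝ :=
  ∑ i, ((1 + ‖v i‖ ^ 2)⁻¹ • 2 • innerSL ℝ (v i)).comp (ContinuousLinearMap.proj i)

theorem logMassDeriv_apply (v w : ι → E) :
    logMassDeriv v w = ∑ i, (1 + ‖v i‖ ^ 2)⁻¹ * (2 * inner ℝ (v i) (w i)) := by
  simp [logMassDeriv]

theorem hasStrictFDerivAt_logMass (v : ι → E) :
    HasStrictFDerivAt logMass (logMassDeriv v) v :=
  HasStrictFDerivAt.fun_sum fun i _ =>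
    (hasStrictFDerivAt_log_one_add_norm_sq (v i)).comp v
      (ContinuousLinearMap.proj (R := ℝ) (φ := fun _ : ι => E) i).hasStrictFDerivAt

theorem logMassDeriv_apply_single [DecidableEq ι] (v : ι → E) (i : ι) (x : E) :
    logMassDeriv v (Pi.single i x) = (1 + ‖v i‖ ^ 2)⁻¹ * (2 * inner ℝ (v i) x) := by
  rw [logMassDeriv_apply, Fintype.sum_eq_single i fun j hj => by simp [hj], Pi.single_eq_same]

theorem logMassDeriv_apply_self (v : ι → E) :
    logMassDeriv v v = ∑ i, (1 + ‖v i‖ ^ 2)⁻¹ * (2 * ‖v i‖ ^ 2) := by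
  simp only [logMassDeriv_apply, real_inner_self_eq_norm_sq]

theorem logMassDeriv_apply_self_pos {v : ι → E} (hv : v ≠ 0) : 0 < logMassDeriv v v := by
  obtain ⟨i, hi⟩ := Function.ne_iff.1 hv
  rw [logMassDeriv_apply_self]
  have hpos : 0 < ‖v i‖ ^ 2 := pow_pos (norm_pos_iff.2 hi) 2
  exact sum_pos' (fun j _ => by positivity) ⟨i, mem_univ i, by positivity⟩

theorem logMassDeriv_apply_self_lt {v : ι → E} (hv : v ≠ 0) :
    logMassDeriv v v < 2 * ∑ i, ‖v i‖ ^ 2 := by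
  obtain ⟨i, hi⟩ := Function.ne_iff.1 hv
  rw [logMassDeriv_apply_self, mul_sum]
  refine sum_lt_sum (fun j _ => ?_) ⟨i, mem_univ i, ?_⟩
  · exact mul_le_of_le_one_left (by positivity) (inv_le_one_of_one_le₀ (by simp))
  · have hpos : 0 < ‖v i‖ ^ 2 := pow_pos (norm_pos_iff.2 hi) 2
    exact mul_lt_of_lt_one_left (by positivity) (inv_lt_one_of_one_lt₀ (by linarith))

end LogMass

section Lattice

variable {N K : ℕ}

def boxFinset (N K : ℕ) : Finset (Zn N) := Fintype.piFinset fun _ => Icc (-(K : ℤ)) K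

theorem mem_boxFinset {n : Zn N} : n ∈ boxFinset N K ↔ inBox K n := by
  simp [boxFinset, inBox, abs_le]

theorem zero_mem_boxFinset : (0 : Zn N) ∈ boxFinset N K := mem_boxFinset.2 fun i => by simp

instance : Nonempty (boxFinset N K) := ⟨⟨0, zero_mem_boxFinset⟩⟩

theorem inBox.succ {n : Zn N} (hn : inBox K n) : inBox (K + 1) n :=
  fun i => (hn i).trans (by omega)

theorem inBox.sub_evec {n : Zn N} (hn : inBox K n) (ν : Fin N) : inBox (K + 1) (n - evec ν) := by
  intro i
  have hn := hn i
  have he : |evec ν i| ≤ 1 := by unfold evec; split_ifs <;> simp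
  have := abs_sub (n i) (evec ν i)
  push_cast
  simp only [Pi.sub_apply]
  omega

theorem fdiff_eq_zero_of_notMem_boxFinset {φ : Zn N → ℂ} (hφ : suppIn K φ) (ν : Fin N) {n : Zn N}
    (hn : n ∉ boxFinset N (K + 1)) : fdiff ν φ n = 0 := by
  rw [mem_boxFinset] at hn
  have h₀ : ¬ inBox K n := fun h => hn h.succ
  have h₁ : ¬ inBox K (n + evec ν) := fun h => hn (by simpa using h.sub_evec ν)
  rw [fdiff, hφ n h₀, hφ _ h₁, sub_zero]

theorem tsum_comp_eq_sum_boxFinset {φ : Zn N → ℂ} (hφ : suppIn K φ) {g : ℂ → ℝ} (hg : g 0 = 0) :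
    ∑' n, g (φ n) = ∑ b : boxFinset N K, g (φ b) := by
  rw [tsum_eq_sum fun n hn => by rw [hφ n (mt mem_boxFinset.2 hn), hg]]
  exact (sum_coe_sort _ _).symm

theorem sum_inner_fdiff_single {s : Finset (Zn N)} {n₀ : Zn N} {ν : Fin N} (h₀ : n₀ ∈ s)
    (h₁ : n₀ - evec ν ∈ s) (φ : Zn N → ℂ) (h : ℂ) :
    ∑ n ∈ s, inner ℝ (fdiff ν φ n) (fdiff ν (Pi.single n₀ h) n)
      = inner ℝ (fdiff ν φ (n₀ - evec ν) - fdiff ν φ n₀) h := by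
  have hshift : ∑ n ∈ s, inner ℝ (fdiff ν φ n) ((Pi.single n₀ h : Zn N → ℂ) (n + evec ν))
      = inner ℝ (fdiff ν φ (n₀ - evec ν)) h := by
    rw [sum_eq_single_of_mem _ h₁ fun n _ hn => ?_]
    · rw [sub_add_cancel, Pi.single_eq_same]
    · rw [Pi.single_eq_of_ne (fun h => hn (eq_sub_of_add_eq h)), inner_zero_right]
  have hsame : ∑ n ∈ s, inner ℝ (fdiff ν φ n) ((Pi.single n₀ h : Zn N → ℂ) n)
      = inner ℝ (fdiff ν φ n₀) h := by
    rw [sum_eq_single_of_mem _ h₀ fun n _ hn => ?_]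
    · rw [Pi.single_eq_same]
    · rw [Pi.single_eq_of_ne hn, inner_zero_right]
  have hsingle : ∀ n, fdiff ν (Pi.single n₀ h) n
      = (Pi.single n₀ h : Zn N → ℂ) (n + evec ν) - (Pi.single n₀ h : Zn N → ℂ) n :=
    fun n => rfl
  simp only [hsingle, inner_sub_right, sum_sub_distrib, hshift, hsame, inner_sub_left]

theorem sum_fdiff_sub_fdiff (φ : Zn N → ℂ) (n : Zn N) :
    ∑ ν, (fdiff ν φ (n - evec ν) - fdiff ν φ n) = -dLap φ n := by
  rw [dLap, ← sum_neg_distrib]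
  refine sum_congr rfl fun ν _ => ?_
  simp only [fdiff, sub_add_cancel]
  ring

-- `boxFinset N K → ℂ` is the finite-dimensional model of `ℓ²(ℤ^N_K)`.
def boxCoord (N K : ℕ) (n : Zn N) : (boxFinset N K → ℂ) →L[ℝ] ℂ :=
  if h : n ∈ boxFinset N K then ContinuousLinearMap.proj ⟨n, h⟩ else 0

def extendByZero (v : boxFinset N K → ℂ) : Zn N → ℂ := fun n => boxCoord N K n v

theorem extendByZero_of_mem (v : boxFinset N K → ℂ) {n : Zn N} (h : n ∈ boxFinset N K) :
    extendByZero v n = v ⟨n, h⟩ := by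
  simp [extendByZero, boxCoord, h]

theorem extendByZero_coe (v : boxFinset N K → ℂ) (b : boxFinset N K) : extendByZero v b = v b :=
  extendByZero_of_mem v b.2

theorem suppIn_extendByZero (v : boxFinset N K → ℂ) : suppIn K (extendByZero v) := by
  intro n hn
  simp [extendByZero, boxCoord, mem_boxFinset, hn]

theorem extendByZero_restrict {φ : Zn N → ℂ} (hφ : suppIn K φ) :
    extendByZero (fun b : boxFinset N K => φ b) = φ := by
  funext n
  by_cases hn : n ∈ boxFinset N K
  · rw [extendByZero_of_mem _ hn]
  · rw [hφ n (mt mem_boxFinset.2 hn)]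
    simp [extendByZero, boxCoord, hn]

theorem extendByZero_single (b : boxFinset N K) (h : ℂ) :
    extendByZero (Pi.single b h) = Pi.single (b : Zn N) h := by
  funext n
  by_cases hn : n ∈ boxFinset N K
  · rw [extendByZero_of_mem _ hn]
    by_cases hnb : n = b
    · subst hnb; simp
    · rw [Pi.single_eq_of_ne hnb, Pi.single_eq_of_ne (fun h => hnb (congrArg Subtype.val h))]
  · rw [suppIn_extendByZero _ n (mt mem_boxFinset.2 hn),
      Pi.single_eq_of_ne (by rintro rfl; exact hn b.2)]

theorem extendByZero_ne_zero {v : boxFinset N K → ℂ} (hv : v ≠ 0) : extendByZero v ≠ 0 :=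
  fun h => hv (funext fun b => by simpa [extendByZero_coe] using congrFun h b)

def boxFdiff (N K : ℕ) (ν : Fin N) (n : Zn N) : (boxFinset N K → ℂ) →L[ℝ] ℂ :=
  boxCoord N K (n + evec ν) - boxCoord N K n

theorem boxFdiff_apply (ν : Fin N) (n : Zn N) (v : boxFinset N K → ℂ) :
    boxFdiff N K ν n v = fdiff ν (extendByZero v) n := rfl

theorem Eomega_extendByZero (ε ω : ℝ) (v : boxFinset N K → ℂ) :
    Eomega ε ω (extendByZero v)
      = ε * ∑ ν, ∑ n ∈ boxFinset N (K + 1), ‖boxFdiff N K ν n v‖ ^ 2 + ω * ∑ b, ‖v b‖ ^ 2 := by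
  have hv := suppIn_extendByZero v
  simp only [Eomega, boxFdiff_apply, extendByZero_coe,
    tsum_comp_eq_sum_boxFinset hv (g := fun z => ‖z‖ ^ 2) (by simp)]
  congr 2
  refine sum_congr rfl fun ν _ => tsum_eq_sum fun n hn => ?_
  rw [fdiff_eq_zero_of_notMem_boxFinset hv ν hn, norm_zero, zero_pow two_ne_zero]

theorem tsum_log_extendByZero (v : boxFinset N K → ℂ) :
    ∑' n, Real.log (1 + ‖extendByZero v n‖ ^ 2) = logMass v := by
  rw [tsum_comp_eq_sum_boxFinset (suppIn_extendByZero v) (g := fun z => Real.log (1 + ‖z‖ ^ 2))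
    (by simp)]
  simp only [extendByZero_coe, logMass]

end Lattice

section Energy

variable {N K : ℕ}

def energyDeriv (ε ω : ℝ) (v : boxFinset N K → ℂ) : (boxFinset N K → ℂ) →L[ℝ] ℝ :=
  ε • ∑ ν, ∑ n ∈ boxFinset N (K + 1),
      (2 • innerSL ℝ (boxFdiff N K ν n v)).comp (boxFdiff N K ν n)
    + ω • ∑ b, (2 • innerSL ℝ (v b)).comp (ContinuousLinearMap.proj b)

theorem hasStrictFDerivAt_Eomega_extendByZero (ε ω : ℝ) (v : boxFinset N K → ℂ) :
    HasStrictFDerivAt (fun v => Eomega ε ω (extendByZero v)) (energyDeriv ε ω v) v := by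
  have hdiff := HasStrictFDerivAt.fun_sum (u := univ) fun ν _ =>
    hasStrictFDerivAt_sum_norm_sq_comp (boxFinset N (K + 1)) (boxFdiff N K ν) v
  have hmass := hasStrictFDerivAt_sum_norm_sq_comp univ
    (ContinuousLinearMap.proj (R := ℝ) (φ := fun _ : boxFinset N K => ℂ)) v
  exact ((hdiff.const_mul ε).add (hmass.const_mul ω)).congr_of_eventuallyEq
    (.of_forall fun v => (Eomega_extendByZero ε ω v).symm)

theorem continuous_Eomega_extendByZero (ε ω : ℝ) :
    Continuous fun v : boxFinset N K → ℂ => Eomega ε ω (extendByZero v) :=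
  continuous_iff_continuousAt.2 fun v =>
    (hasStrictFDerivAt_Eomega_extendByZero ε ω v).continuousAt

theorem energyDeriv_apply (ε ω : ℝ) (v w : boxFinset N K → ℂ) :
    energyDeriv ε ω v w = 2 * (ε * ∑ ν, ∑ n ∈ boxFinset N (K + 1),
        inner ℝ (fdiff ν (extendByZero v) n) (fdiff ν (extendByZero w) n)
      + ω * ∑ b, inner ℝ (v b) (w b)) := by
  simp only [energyDeriv, add_apply, smul_apply, _root_.sum_apply, ContinuousLinearMap.comp_apply,
    ContinuousLinearMap.proj_apply, coe_innerSL_apply, boxFdiff_apply, smul_eq_mul, nsmul_eq_mul,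
    Nat.cast_ofNat, ← mul_sum]
  ring

theorem energyDeriv_apply_self (ε ω : ℝ) (v : boxFinset N K → ℂ) :
    energyDeriv ε ω v v = 2 * Eomega ε ω (extendByZero v) := by
  simp only [energyDeriv_apply, Eomega_extendByZero, boxFdiff_apply, real_inner_self_eq_norm_sq]

theorem energyDeriv_apply_single (ε ω : ℝ) (v : boxFinset N K → ℂ) (b : boxFinset N K) (h : ℂ) :
    energyDeriv ε ω v (Pi.single b h)
      = 2 * inner ℝ (-(ε : ℂ) * dLap (extendByZero v) b + ω * extendByZero v b) h := by
  have hb := mem_boxFinset.1 b.2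
  have hmass :
      ∑ b', inner ℝ (v b') ((Pi.single b h : boxFinset N K → ℂ) b') = inner ℝ (v b) h := by
    rw [Fintype.sum_eq_single b fun b' hb' => by simp [hb'], Pi.single_eq_same]
  rw [energyDeriv_apply, extendByZero_single, hmass]
  simp only [sum_inner_fdiff_single (mem_boxFinset.2 hb.succ) (mem_boxFinset.2 (hb.sub_evec _)),
    ← sum_inner, sum_fdiff_sub_fdiff, extendByZero_coe, inner_add_left, neg_mul_comm,
    ← Complex.real_smul, real_inner_smul_left]

end Energy

section Multiplier

variable {N K : ℕ} {ε ω μ : ℝ} {v : boxFinset N K → ℂ}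

theorem lt_of_energyDeriv_eq_mul (hε : 0 ≤ ε) (hω : 0 < ω) (hv : v ≠ 0)
    (hμ : ∀ w, energyDeriv ε ω v w = μ * logMassDeriv v w) : ω < μ := by
  have hS := logMassDeriv_apply_self_pos hv
  have hE : ω * ∑ b, ‖v b‖ ^ 2 ≤ Eomega ε ω (extendByZero v) := by
    rw [Eomega_extendByZero, le_add_iff_nonneg_left]
    positivity
  have hkey : 2 * Eomega ε ω (extendByZero v) = μ * logMassDeriv v v := by
    rw [← energyDeriv_apply_self, hμ]
  have hlt := mul_lt_mul_of_pos_left (logMassDeriv_apply_self_lt hv) hω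
  exact lt_of_mul_lt_mul_right (by linarith) hS.le

theorem euler_lagrange_of_energyDeriv_eq_mul (hμ : ∀ w, energyDeriv ε ω v w = μ * logMassDeriv v w)
    {n : Zn N} (hn : inBox K n) :
    -(ε : ℂ) * dLap (extendByZero v) n + (ω : ℂ) * extendByZero v n
      = (μ : ℂ) * extendByZero v n / ((1 + ‖extendByZero v n‖ ^ 2 : ℝ) : ℂ) := by
  set b : boxFinset N K := ⟨n, mem_boxFinset.2 hn⟩
  have hφb : extendByZero v n = v b := extendByZero_coe v b
  have hcoeff : (μ : ℂ) * v b / ((1 + ‖v b‖ ^ 2 : ℝ) : ℂ) = (μ * (1 + ‖v b‖ ^ 2)⁻¹ : ℝ) • v b := by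
    rw [Complex.real_smul]
    push_cast
    ring
  rw [hφb, hcoeff]
  refine ext_inner_right ℝ fun h => ?_
  have := hμ (Pi.single b h)
  rw [energyDeriv_apply_single, logMassDeriv_apply_single, hφb] at this
  rw [real_inner_smul_left]
  linarith

end Multiplier

theorem exists_minimizer_Eomega_general {N K : ℕ}
    (ε ω R : ℝ) (hε : 0 < ε) (hω : 0 < ω) (hR : 0 < R) :
    ∃ (φ : Zn N → ℂ) (Λ : ℝ),
      suppIn K φ ∧
      (∑' n, Real.log (1 + ‖φ n‖ ^ 2)) = R ∧
      (∀ ψ : Zn N → ℂ, suppIn K ψ → (∑' n, Real.log (1 + ‖ψ n‖ ^ 2)) = R →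
        Eomega ε ω φ ≤ Eomega ε ω ψ) ∧
      ω < Λ ∧
      (∀ n : Zn N, inBox K n →
        -(ε : ℂ) * dLap φ n + (ω : ℂ) * φ n
          = (Λ : ℂ) * φ n / ((1 + ‖φ n‖ ^ 2 : ℝ) : ℂ)) ∧
      φ ≠ 0 := by
  obtain ⟨v, hvR : logMass v = R, hmin⟩ :=
    (isCompact_logMass_eq (ι := boxFinset N K) (E := ℂ) R).exists_isMinOn
      (exists_logMass_eq hR.le) (continuous_Eomega_extendByZero ε ω).continuousOn
  have hv : v ≠ 0 := by
    rintro rfl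
    simp [logMass] at hvR
    linarith
  obtain ⟨μ, hμ⟩ := IsMinOn.exists_eq_mul_of_hasStrictFDerivAt (by rwa [hvR])
    (hasStrictFDerivAt_Eomega_extendByZero ε ω v) (hasStrictFDerivAt_logMass v)
    fun h => (logMassDeriv_apply_self_pos hv).ne' (by rw [h, zero_apply])
  refine ⟨extendByZero v, μ, suppIn_extendByZero v, by rw [tsum_log_extendByZero, hvR],
    fun ψ hψ hψR => ?_, lt_of_energyDeriv_eq_mul hε.le hω hv hμ,
    fun n hn => euler_lagrange_of_energyDeriv_eq_mul hμ hn, extendByZero_ne_zero hv⟩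
  rw [← extendByZero_restrict hψ] at hψR ⊢
  exact hmin (by rwa [tsum_log_extendByZero] at hψR)

/-- Constrained minimization problem A.I for the defocusing saturable DNLS:
existence of a minimizer of `E_ω` on `B₁` and of a Lagrange multiplier `Λ > ω`
solving the Euler–Lagrange equation. -/
theorem exists_minimizer_Eomega {N K : ℕ} (hN : 0 < N) (hK : 0 < K)
    (ε ω R : ℝ) (hε : 0 < ε) (hω : 0 < ω) (hR : 0 < R) :
    ∃ (φ : Zn N → ℂ) (Λ : ℝ),
      suppIn K φ ∧
      (∑' n, Real.log (1 + ‖φ n‖ ^ 2)) = R ∧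
      (∀ ψ : Zn N → ℂ, suppIn K ψ → (∑' n, Real.log (1 + ‖ψ n‖ ^ 2)) = R →
        Eomega ε ω φ ≤ Eomega ε ω ψ) ∧
      ω < Λ ∧
      (∀ n : Zn N, inBox K n →
        -(ε : ℂ) * dLap φ n + (ω : ℂ) * φ n
          = (Λ : ℂ) * φ n / ((1 + ‖φ n‖ ^ 2 : ℝ) : ℂ)) ∧
      φ ≠ 0 :=
  exists_minimizer_Eomega_general ε ω R hε hω hR
end
end

section
/- Let N, K be positive integers, ε > 0, and Λ > 4εN. Consider on ℓ²(ℤ^N_K) the Hamiltonian H[φ] = ε Σ_{ν=1}^N ‖∇ν⁺φ‖₂² − Λ Σ_{‖n‖_∞ ≤ K} log(1 + |φ_n|²). Let R > 0 satisfy R² < (Λ − 4εN)/(4εN). Then there exist φ* ∈ ℓ²(ℤ^N_K) with Σ_{‖n‖_∞ ≤ K} |φ*_n|² = R² attaining inf { H[φ] : φ ∈ ℓ²(ℤ^N_K), Σ_{‖n‖_∞ ≤ K} |φ_n|² = R² }, and a real number ω with 0 < ω < Λ, such that −ε(Δ_d φ*)_n + ω φ*_n = Λ φ*_n / (1 + |φ*_n|²)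 for all n with ‖n‖_∞ ≤ K (where φ*_n = 0 for ‖n‖_∞ > K). -/
open scoped BigOperators
noncomputable section

/-- The Hamiltonian `H[φ] = ε Σ_ν ‖∇ν⁺φ‖₂² − Λ Σ_n log(1+|φ_n|²)` of the
defocusing saturable DNLS. -/
def Ham {N : ℕ} (ε Λ : ℝ) (φ : Zn N → ℂ) : ℝ :=
  ε * ∑ ν : Fin N, ∑' n, ‖fdiff ν φ n‖ ^ 2 - Λ * ∑' n, Real.log (1 + ‖φ n‖ ^ 2)

/-! ### auxiliary setup -/

def boxF (N K : ℕ) : Finset (Zn N) :=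
  Finset.Icc (fun _ => -(K : ℤ)) (fun _ => (K : ℤ))

lemma mem_boxF {N K : ℕ} {n : Zn N} : n ∈ boxF N K ↔ inBox K n := by
  simp only [boxF, Finset.mem_Icc, inBox, Pi.le_def, abs_le]
  constructor
  · rintro ⟨h1, h2⟩ i; exact ⟨h1 i, h2 i⟩
  · intro h; exact ⟨fun i => (h i).1, fun i => (h i).2⟩

abbrev EK (N K : ℕ) := {n : Zn N // n ∈ boxF N K} → ℂ

def extK {N K : ℕ} (x : EK N K) : Zn N → ℂ :=
  fun n => if h : n ∈ boxF N K then x ⟨n, h⟩ else 0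

lemma extK_suppIn {N K : ℕ} (x : EK N K) : suppIn K (extK x) := by
  intro n hn
  simp only [extK, dif_neg (fun h => hn (mem_boxF.mp h))]

lemma extK_restrict {N K : ℕ} (ψ : Zn N → ℂ) (hψ : suppIn K ψ) :
    extK (N := N) (K := K) (fun b => ψ b) = ψ := by
  funext n
  by_cases h : n ∈ boxF N K
  · simp [extK, h]
  · simp [extK, h, hψ n (fun hb => h (mem_boxF.mpr hb))]

/-- the constraint functional -/
def GK {N K : ℕ} (x : EK N K) : ℝ := ∑ b, ‖x b‖ ^ 2

lemma tsum_normsq_extK {N K : ℕ} (x : EK N K) :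
    (∑' n, ‖extK x n‖ ^ 2) = GK x := by
  rw [tsum_eq_sum (s := boxF N K) (f := fun n => ‖extK x n‖ ^ 2)
    (by intro n hn; simp [extK, dif_neg hn])]
  rw [GK, ← Finset.sum_coe_sort]
  apply Finset.sum_congr rfl
  intro b _; simp [extK]

lemma tsum_log_extK {N K : ℕ} (x : EK N K) :
    (∑' n, Real.log (1 + ‖extK x n‖ ^ 2)) = ∑ b, Real.log (1 + ‖x b‖ ^ 2) := by
  rw [tsum_eq_sum (s := boxF N K)
    (f := fun n => Real.log (1 + ‖extK x n‖ ^ 2))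
    (by intro n hn; simp [extK, dif_neg hn])]
  rw [← Finset.sum_coe_sort]
  apply Finset.sum_congr rfl
  intro b _; simp [extK]

lemma fdiff_support {N K : ℕ} (x : EK N K) (ν : Fin N) (n : Zn N)
    (hn : n ∉ boxF N (K + 1)) : fdiff ν (extK x) n = 0 := by
  have hbox : ∀ m : Zn N, m ∈ boxF N K → ∀ i, |m i| ≤ (K : ℤ) := fun m hm => mem_boxF.mp hm
  have h1 : extK x n = 0 := by
    apply extK_suppIn
    intro hb
    exact hn (mem_boxF.mpr (fun i => le_trans (hb i) (by push_cast; omega)))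
  have h2 : extK x (n + evec ν) = 0 := by
    apply extK_suppIn
    intro hb
    apply hn
    apply mem_boxF.mpr
    intro i
    have h := hb i
    simp only [Pi.add_apply, evec] at h
    rw [abs_le] at h ⊢
    by_cases hi : i = ν
    · subst hi; rw [if_pos rfl] at h; push_cast; omega
    · rw [if_neg hi] at h; push_cast; omega
  simp [fdiff, h1, h2]

lemma tsum_fdiff_extK {N K : ℕ} (x : EK N K) (ν : Fin N) :
    (∑' n, ‖fdiff ν (extK x) n‖ ^ 2)
      = ∑ n ∈ boxF N (K + 1), ‖fdiff ν (extK x) n‖ ^ 2 := by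
  apply tsum_eq_sum
  intro n hn; simp [fdiff_support x ν n hn]

/-- the objective functional on the finite-dimensional space -/
def FK {N K : ℕ} (ε Λ : ℝ) (x : EK N K) : ℝ :=
  ε * ∑ ν : Fin N, ∑ n ∈ boxF N (K + 1), ‖fdiff ν (extK x) n‖ ^ 2
    - Λ * ∑ b, Real.log (1 + ‖x b‖ ^ 2)

lemma Ham_extK {N K : ℕ} (ε Λ : ℝ) (x : EK N K) :
    Ham ε Λ (extK x) = FK ε Λ x := by
  simp only [Ham, FK, tsum_log_extK]
  congr 1
  congr 1
  exact Finset.sum_congr rfl fun ν _ => tsum_fdiff_extK x ν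

/-! ### continuous linear maps -/

def evalExtCLM (N K : ℕ) (n : Zn N) : EK N K →L[ℝ] ℂ :=
  if h : n ∈ boxF N K then ContinuousLinearMap.proj ⟨n, h⟩ else 0

lemma evalExtCLM_apply {N K : ℕ} (n : Zn N) (x : EK N K) :
    evalExtCLM N K n x = extK x n := by
  by_cases h : n ∈ boxF N K <;> simp [evalExtCLM, extK, h]

def fdCLM (N K : ℕ) (ν : Fin N) (n : Zn N) : EK N K →L[ℝ] ℂ :=
  evalExtCLM N K (n + evec ν) - evalExtCLM N K n

lemma fdCLM_apply {N K : ℕ} (ν : Fin N) (n : Zn N) (x : EK N K) :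
    fdCLM N K ν n x = fdiff ν (extK x) n := by
  simp [fdCLM, fdiff, evalExtCLM_apply]

lemma FK_eq {N K : ℕ} (ε Λ : ℝ) (x : EK N K) :
    FK ε Λ x = ε * ∑ ν : Fin N, ∑ n ∈ boxF N (K + 1), ‖fdCLM N K ν n x‖ ^ 2
      - Λ * ∑ b, Real.log (1 + ‖x b‖ ^ 2) := by
  simp [FK, fdCLM_apply]

lemma FK_cont {N K : ℕ} (ε Λ : ℝ) : Continuous (FK (N := N) (K := K) ε Λ) := by
  have : (FK (N := N) (K := K) ε Λ)
      = fun x => ε * ∑ ν : Fin N, ∑ n ∈ boxF N (K + 1), ‖fdCLM N K ν n x‖ ^ 2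
        - Λ * ∑ b, Real.log (1 + ‖x b‖ ^ 2) := funext (FK_eq ε Λ)
  rw [this]
  apply Continuous.sub
  · apply continuous_const.mul
    apply continuous_finset_sum; intro ν _
    apply continuous_finset_sum; intro n _
    exact ((fdCLM N K ν n).continuous.norm).pow 2
  · apply continuous_const.mul
    apply continuous_finset_sum; intro b _
    apply Continuous.log
    · exact continuous_const.add (((continuous_apply b).norm).pow 2)
    · intro x; positivity

lemma GK_cont {N K : ℕ} : Continuous (GK (N := N) (K := K)) := by
  apply continuous_finset_sum; intro b _
  exact ((continuous_apply b).norm).pow 2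

lemma exists_min {N K : ℕ} (ε Λ R : ℝ) (hR : 0 < R) :
    ∃ x₀ : EK N K, GK x₀ = R ^ 2 ∧
      ∀ x : EK N K, GK x = R ^ 2 → FK ε Λ x₀ ≤ FK ε Λ x := by
  set S : Set (EK N K) := {x | GK x = R ^ 2} with hS
  have hclosed : IsClosed S := isClosed_eq GK_cont continuous_const
  have hsub : S ⊆ Metric.closedBall 0 R := by
    intro x hx
    rw [Metric.mem_closedBall, dist_zero_right]
    rw [pi_norm_le_iff_of_nonneg hR.le]
    intro b
    have h1 : ‖x b‖ ^ 2 ≤ R ^ 2 := by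
      rw [← hx]
      exact Finset.single_le_sum (f := fun b => ‖x b‖ ^ 2)
        (fun b _ => by positivity) (Finset.mem_univ b)
    exact (pow_le_pow_iff_left₀ (norm_nonneg _) hR.le (by norm_num)).mp h1
  have hcompact : IsCompact S :=
    (Metric.isCompact_of_isClosed_isBounded hclosed
      (Metric.isBounded_closedBall.subset hsub))
  have hne : S.Nonempty := by
    have h0 : (fun _ => (0 : ℤ)) ∈ boxF N K := by
      rw [mem_boxF]; intro i; simp
    refine ⟨fun b => if b = ⟨_, h0⟩ then (R : ℂ) else 0, ?_⟩
    simp only [hS, Set.mem_setOf_eq, GK]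
    simp only [hS, Set.mem_setOf_eq, GK, apply_ite (fun z : ℂ => ‖z‖ ^ 2), norm_zero,
      ne_eq, OfNat.ofNat_ne_zero, not_false_eq_true, zero_pow, Finset.sum_ite_eq',
      Finset.mem_univ, if_true, Complex.norm_real, Real.norm_eq_abs, abs_of_pos hR]
  obtain ⟨x₀, hx₀S, hmin⟩ := hcompact.exists_isMinOn hne ((FK_cont ε Λ).continuousOn)
  exact ⟨x₀, hx₀S, fun x hx => hmin hx⟩

/-! ### derivatives -/

open ContinuousLinearMap in
def dQ (N K : ℕ) (ν : Fin N) (n : Zn N) (x : EK N K) : EK N K →L[ℝ] ℝ :=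
  (2 • innerSL ℝ (fdCLM N K ν n x)).comp (fdCLM N K ν n)

lemma hasDQ {N K : ℕ} (ν : Fin N) (n : Zn N) (x : EK N K) :
    HasStrictFDerivAt (fun y => ‖fdCLM N K ν n y‖ ^ 2) (dQ N K ν n x) x :=
  (hasStrictFDerivAt_norm_sq (fdCLM N K ν n x)).comp x
    ((fdCLM N K ν n).hasStrictFDerivAt)

open ContinuousLinearMap in
def dG (N K : ℕ) (x : EK N K) : EK N K →L[ℝ] ℝ :=
  ∑ b, (2 • innerSL ℝ (x b)).comp (ContinuousLinearMap.proj b)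

lemma hasDG {N K : ℕ} (x : EK N K) :
    HasStrictFDerivAt GK (dG N K x) x := by
  apply HasStrictFDerivAt.fun_sum
  intro b _
  have hproj := (ContinuousLinearMap.proj (R := ℝ)
      (φ := fun _ : {n : Zn N // n ∈ boxF N K} => ℂ) b).hasStrictFDerivAt (x := x)
  exact (hasStrictFDerivAt_norm_sq (x b)).comp x hproj

open ContinuousLinearMap in
def dL (N K : ℕ) (b : {n : Zn N // n ∈ boxF N K}) (x : EK N K) : EK N K →L[ℝ] ℝ :=
  (1 + ‖x b‖ ^ 2)⁻¹ • ((2 • innerSL ℝ (x b)).comp (ContinuousLinearMap.proj b))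

lemma hasDL {N K : ℕ} (b : {n : Zn N // n ∈ boxF N K}) (x : EK N K) :
    HasStrictFDerivAt (fun y => Real.log (1 + ‖y b‖ ^ 2)) (dL N K b x) x := by
  have h1 : HasStrictFDerivAt (fun y : EK N K => 1 + ‖y b‖ ^ 2)
      ((2 • innerSL ℝ (x b)).comp (ContinuousLinearMap.proj b)) x := by
    have := ((hasStrictFDerivAt_norm_sq (x b)).comp x
      (ContinuousLinearMap.proj (R := ℝ) (φ := fun _ : {n : Zn N // n ∈ boxF N K} => ℂ) b).hasStrictFDerivAt).const_add 1
    exact this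
  have h2 := h1.log (by positivity)
  exact h2

def dF (N K : ℕ) (ε Λ : ℝ) (x : EK N K) : EK N K →L[ℝ] ℝ :=
  ε • (∑ ν : Fin N, ∑ n ∈ boxF N (K + 1), dQ N K ν n x) - Λ • (∑ b, dL N K b x)

lemma hasDF {N K : ℕ} (ε Λ : ℝ) (x : EK N K) :
    HasStrictFDerivAt (FK ε Λ) (dF N K ε Λ x) x := by
  have hXFK : FK (N := N) (K := K) ε Λ
      = fun y => ε * ∑ ν : Fin N, ∑ n ∈ boxF N (K + 1), ‖fdCLM N K ν n y‖ ^ 2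
        - Λ * ∑ b, Real.log (1 + ‖y b‖ ^ 2) := funext (FK_eq ε Λ)
  rw [hXFK, dF]
  apply HasStrictFDerivAt.sub
  · have h : HasStrictFDerivAt
        (fun y => ∑ ν : Fin N, ∑ n ∈ boxF N (K + 1), ‖fdCLM N K ν n y‖ ^ 2)
        (∑ ν : Fin N, ∑ n ∈ boxF N (K + 1), dQ N K ν n x) x := by
      apply HasStrictFDerivAt.fun_sum
      intro ν _
      exact HasStrictFDerivAt.fun_sum (fun n _ => hasDQ ν n x)
    simpa [smul_eq_mul] using h.const_mul ε
  · have h : HasStrictFDerivAt (fun y : EK N K => ∑ b, Real.log (1 + ‖y b‖ ^ 2))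
        (∑ b, dL N K b x) x := HasStrictFDerivAt.fun_sum (fun b _ => hasDL b x)
    simpa [smul_eq_mul] using h.const_mul Λ

/-! ### evaluation of the derivatives -/

open scoped RealInnerProductSpace

lemma dQ_apply {N K : ℕ} (ν : Fin N) (n : Zn N) (x v : EK N K) :
    dQ N K ν n x v = 2 * ⟪fdiff ν (extK x) n, fdiff ν (extK v) n⟫ := by
  simp [dQ, fdCLM_apply, two_smul, two_mul]

lemma dL_apply {N K : ℕ} (b : {n : Zn N // n ∈ boxF N K}) (x v : EK N K) :
    dL N K b x v = (1 + ‖x b‖ ^ 2)⁻¹ * (2 * ⟪x b, v b⟫) := by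
  simp [dL, two_smul, two_mul]; ring

lemma dG_apply {N K : ℕ} (x v : EK N K) :
    dG N K x v = ∑ b, 2 * ⟪x b, v b⟫ := by
  simp [dG, two_smul, two_mul]

lemma dF_apply {N K : ℕ} (ε Λ : ℝ) (x v : EK N K) :
    dF N K ε Λ x v
      = ε * ∑ ν : Fin N, ∑ n ∈ boxF N (K + 1),
          2 * ⟪fdiff ν (extK x) n, fdiff ν (extK v) n⟫
        - Λ * ∑ b, (1 + ‖x b‖ ^ 2)⁻¹ * (2 * ⟪x b, v b⟫) := by
  simp only [dF, ContinuousLinearMap.sub_apply, ContinuousLinearMap.smul_apply,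
    ContinuousLinearMap.sum_apply, smul_eq_mul]
  rw [Finset.sum_congr rfl fun ν _ => Finset.sum_congr rfl fun n _ => dQ_apply ν n x v,
    Finset.sum_congr rfl fun b _ => dL_apply b x v]

/-! ### box membership helpers -/

lemma mem_boxF_succ {N K : ℕ} {m : Zn N} (hm : m ∈ boxF N K) : m ∈ boxF N (K + 1) := by
  rw [mem_boxF] at hm ⊢
  intro i; have := hm i; push_cast; omega

lemma mem_boxF_succ_sub {N K : ℕ} {m : Zn N} (hm : m ∈ boxF N K) (ν : Fin N) :
    m - evec ν ∈ boxF N (K + 1) := by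
  rw [mem_boxF] at hm ⊢
  intro i
  have := hm i
  simp only [Pi.sub_apply, evec]
  by_cases hi : i = ν
  · rw [if_pos hi]; rw [abs_le] at this ⊢; push_cast; omega
  · rw [if_neg hi]; rw [abs_le] at this ⊢; push_cast; omega

/-! ### delta vectors -/

def deltaV {N K : ℕ} (b : {n : Zn N // n ∈ boxF N K}) (c : ℂ) : EK N K :=
  fun b' => if b' = b then c else 0

lemma extK_deltaV {N K : ℕ} (b : {n : Zn N // n ∈ boxF N K}) (c : ℂ) (m : Zn N) :
    extK (deltaV b c) m = if m = (b : Zn N) then c else 0 := by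
  by_cases h : m ∈ boxF N K
  · simp only [extK, dif_pos h, deltaV]
    by_cases he : m = (b : Zn N)
    · rw [if_pos he, if_pos (Subtype.ext he)]
    · rw [if_neg he, if_neg (fun hc => he (congrArg Subtype.val hc))]
  · rw [extK, dif_neg h, if_neg ?_]
    intro he; exact h (by rw [he]; exact b.2)

lemma sum_inner_ite {N : ℕ} {T : Finset (Zn N)} (w : Zn N → ℂ) {m : Zn N}
    (hm : m ∈ T) (c : ℂ) :
    (∑ n ∈ T, ⟪w n, if n = m then c else 0⟫) = ⟪w m, c⟫ := by
  rw [Finset.sum_eq_single m (fun n _ hne => by rw [if_neg hne, inner_zero_right])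
    (fun h => absurd hm h)]
  rw [if_pos rfl]

lemma kinetic_delta {N K : ℕ} (x : EK N K) (b : {n : Zn N // n ∈ boxF N K}) (c : ℂ)
    (ν : Fin N) :
    (∑ n ∈ boxF N (K + 1), ⟪fdiff ν (extK x) n, fdiff ν (extK (deltaV b c)) n⟫)
      = -⟪extK x ((b : Zn N) + evec ν) + extK x ((b : Zn N) - evec ν)
          - 2 * extK x (b : Zn N), c⟫ := by
  have hterm : ∀ n : Zn N, fdiff ν (extK (deltaV b c)) n
      = (if n = (b : Zn N) - evec ν then c else 0) - (if n = (b : Zn N) then c else 0) := by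
    intro n
    rw [fdiff, extK_deltaV, extK_deltaV]
    congr 1
    exact if_congr (by constructor <;> intro h <;> [exact eq_sub_of_add_eq h;
      exact (by rw [h]; abel)]) rfl rfl
  calc (∑ n ∈ boxF N (K + 1), ⟪fdiff ν (extK x) n, fdiff ν (extK (deltaV b c)) n⟫)
      = (∑ n ∈ boxF N (K + 1), (⟪fdiff ν (extK x) n, if n = (b : Zn N) - evec ν then c else 0⟫
          - ⟪fdiff ν (extK x) n, if n = (b : Zn N) then c else 0⟫)) := by
        refine Finset.sum_congr rfl fun n _ => ?_
        rw [hterm n, inner_sub_right]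
    _ = ⟪fdiff ν (extK x) ((b : Zn N) - evec ν), c⟫ - ⟪fdiff ν (extK x) (b : Zn N), c⟫ := by
        rw [Finset.sum_sub_distrib,
          sum_inner_ite _ (mem_boxF_succ_sub b.2 ν) c,
          sum_inner_ite _ (mem_boxF_succ b.2) c]
    _ = -⟪extK x ((b : Zn N) + evec ν) + extK x ((b : Zn N) - evec ν)
          - 2 * extK x (b : Zn N), c⟫ := by
        rw [fdiff, fdiff, sub_add_cancel, ← inner_sub_left, ← inner_neg_left]
        congr 1
        ring

/-! ### Lagrange multiplier -/

lemma dG_self {N K : ℕ} (x : EK N K) : dG N K x x = 2 * GK x := by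
  rw [dG_apply, GK, Finset.mul_sum]
  exact Finset.sum_congr rfl fun b _ => by rw [real_inner_self_eq_norm_sq]

lemma exists_lagrange {N K : ℕ} (ε Λ R : ℝ) (hR : 0 < R) (x₀ : EK N K)
    (hG0 : GK x₀ = R ^ 2)
    (hmin : ∀ x : EK N K, GK x = R ^ 2 → FK ε Λ x₀ ≤ FK ε Λ x) :
    ∃ lam : ℝ, ∀ v, dF N K ε Λ x₀ v = lam * dG N K x₀ v := by
  have hextr : IsLocalExtrOn (FK ε Λ) {x | GK x = GK x₀} x₀ := by
    left
    exact eventually_nhdsWithin_of_forall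
      (fun x hx => hmin x (by rw [← hG0]; exact hx))
  obtain ⟨a, b, hab, heq⟩ :=
    hextr.exists_multipliers_of_hasStrictFDerivAt_1d (hasDG x₀) (hasDF ε Λ x₀)
  have hb : b ≠ 0 := by
    rintro rfl
    have ha : a ≠ 0 := by
      intro h0; apply hab; rw [h0]; rfl
    have h1 := congrArg (fun L : EK N K →L[ℝ] ℝ => L x₀) heq
    simp only [ContinuousLinearMap.add_apply, ContinuousLinearMap.smul_apply,
      ContinuousLinearMap.zero_apply, smul_eq_mul, zero_mul, zero_smul, add_zero] at h1
    rw [dG_self, hG0] at h1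
    have : (2 : ℝ) * R ^ 2 ≠ 0 := by positivity
    rcases mul_eq_zero.mp h1 with h | h
    · exact ha h
    · exact this h
  refine ⟨-a / b, fun v => ?_⟩
  have h1 := congrArg (fun L : EK N K →L[ℝ] ℝ => L v) heq
  simp only [ContinuousLinearMap.add_apply, ContinuousLinearMap.smul_apply,
    ContinuousLinearMap.zero_apply, smul_eq_mul] at h1
  field_simp
  linarith [h1]

/-! ### pointwise Euler–Lagrange equation -/

lemma extK_coe {N K : ℕ} (x : EK N K) (b : {n : Zn N // n ∈ boxF N K}) :
    extK x (b : Zn N) = x b := by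
  simp [extK, b.2]

lemma EL_pointwise {N K : ℕ} (ε Λ lam : ℝ) (x₀ : EK N K)
    (hlam : ∀ v, dF N K ε Λ x₀ v = lam * dG N K x₀ v)
    (n : Zn N) (hn : n ∈ boxF N K) :
    -(ε : ℂ) * dLap (extK x₀) n + ((-lam : ℝ) : ℂ) * extK x₀ n
      = (Λ : ℂ) * extK x₀ n / ((1 + ‖extK x₀ n‖ ^ 2 : ℝ) : ℂ) := by
  set b : {m : Zn N // m ∈ boxF N K} := ⟨n, hn⟩ with hb
  have hcoe : (b : Zn N) = n := rfl
  have hphib : extK x₀ n = x₀ b := by rw [← hcoe, extK_coe]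
  -- evaluate dG at delta vectors
  have hdG : ∀ c : ℂ, dG N K x₀ (deltaV b c) = 2 * ⟪x₀ b, c⟫ := by
    intro c
    rw [dG_apply]
    rw [Finset.sum_eq_single b (fun b' _ hne => by
      simp [deltaV, if_neg hne, inner_zero_right]) (fun h => absurd (Finset.mem_univ b) h)]
    simp [deltaV]
  -- evaluate dF at delta vectors
  have hdF : ∀ c : ℂ, dF N K ε Λ x₀ (deltaV b c)
      = ε * (2 * -⟪dLap (extK x₀) n, c⟫)
        - Λ * ((1 + ‖x₀ b‖ ^ 2)⁻¹ * (2 * ⟪x₀ b, c⟫)) := by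
    intro c
    rw [dF_apply]
    congr 1
    · rw [Finset.sum_congr rfl (fun ν _ => by
        rw [← Finset.mul_sum, kinetic_delta x₀ b c ν] :
        ∀ ν ∈ Finset.univ, _ = 2 * -⟪extK x₀ ((b : Zn N) + evec ν)
          + extK x₀ ((b : Zn N) - evec ν) - 2 * extK x₀ (b : Zn N), c⟫)]
      rw [show dLap (extK x₀) n = ∑ ν : Fin N,
          (extK x₀ ((b : Zn N) + evec ν) + extK x₀ ((b : Zn N) - evec ν)
            - 2 * extK x₀ (b : Zn N)) from by simp only [dLap, hcoe],
        sum_inner, ← Finset.sum_neg_distrib, Finset.mul_sum]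
      simp only [Finset.mul_sum]
    · congr 1
      rw [Finset.sum_eq_single b (fun b' _ hne => by
        simp [deltaV, if_neg hne, inner_zero_right]) (fun h => absurd (Finset.mem_univ b) h)]
      simp [deltaV]
  -- the complex vector that must vanish
  set W : ℂ := -(ε • dLap (extK x₀) n) - ((Λ * (1 + ‖x₀ b‖ ^ 2)⁻¹) • x₀ b)
      - (lam • x₀ b) with hWdef
  have key : ∀ c : ℂ, ⟪W, c⟫ = 0 := by
    intro c
    have h := hlam (deltaV b c)
    rw [hdF c, hdG c] at h
    simp only [hWdef, inner_sub_left, inner_neg_left, real_inner_smul_left]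
    linarith
  have hW : W = 0 := by
    have h1 := key 1
    have h2 := key Complex.I
    simp only [Complex.inner, map_one, mul_one, Complex.mul_re, Complex.conj_re,
      Complex.conj_im, Complex.I_re, Complex.I_im, mul_zero, mul_one, zero_sub,
      neg_neg, sub_zero] at h1 h2
    exact Complex.ext (by simpa using h1) (by simpa using h2)
  -- translate to the complex equation
  have hW' : -(ε : ℂ) * dLap (extK x₀) n
      - ((Λ : ℂ) * (((1 + ‖x₀ b‖ ^ 2 : ℝ)) : ℂ)⁻¹) * x₀ b - (lam : ℂ) * x₀ b = 0 := by
    have := hW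
    rw [hWdef] at this
    simpa [Complex.real_smul, Complex.ofReal_mul, Complex.ofReal_inv, neg_mul] using this
  rw [hphib, div_eq_mul_inv]
  push_cast at hW' ⊢
  linear_combination hW'

/-! ### bounds -/

lemma sum_box_normsq {N K : ℕ} (x : EK N K) :
    ∑ m ∈ boxF N K, ‖extK x m‖ ^ 2 = GK x := by
  rw [GK, ← Finset.sum_coe_sort]
  exact Finset.sum_congr rfl fun b _ => by simp [extK]

lemma sum_normsq_le {N K : ℕ} (x : EK N K) (U : Finset (Zn N)) :
    ∑ m ∈ U, ‖extK x m‖ ^ 2 ≤ GK x := by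
  rw [← sum_box_normsq x]
  have h1 : ∑ m ∈ U, ‖extK x m‖ ^ 2 ≤ ∑ m ∈ U ∪ boxF N K, ‖extK x m‖ ^ 2 :=
    Finset.sum_le_sum_of_subset_of_nonneg Finset.subset_union_left
      (fun m _ _ => by positivity)
  have h2 : ∑ m ∈ U ∪ boxF N K, ‖extK x m‖ ^ 2 = ∑ m ∈ boxF N K, ‖extK x m‖ ^ 2 :=
    (Finset.sum_subset Finset.subset_union_right (fun m _ hm => by
      rw [extK, dif_neg hm]; simp)).symm
  linarith

lemma kin_le {N K : ℕ} (x : EK N K) (R : ℝ) (hG : GK x = R ^ 2) :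
    ∑ ν : Fin N, ∑ n ∈ boxF N (K + 1), ‖fdiff ν (extK x) n‖ ^ 2
      ≤ 4 * N * R ^ 2 := by
  have hν : ∀ ν : Fin N, ∑ n ∈ boxF N (K + 1), ‖fdiff ν (extK x) n‖ ^ 2 ≤ 4 * R ^ 2 := by
    intro ν
    have hbound : ∀ n ∈ boxF N (K + 1), ‖fdiff ν (extK x) n‖ ^ 2
        ≤ 2 * ‖extK x (n + evec ν)‖ ^ 2 + 2 * ‖extK x n‖ ^ 2 := by
      intro n _
      have h := norm_sub_le (extK x (n + evec ν)) (extK x n)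
      rw [fdiff]
      have h2 := mul_self_le_mul_self (norm_nonneg (extK x (n + evec ν) - extK x n)) h
      nlinarith [sq_nonneg (‖extK x (n + evec ν)‖ - ‖extK x n‖), h2]
    have h1 : ∑ n ∈ boxF N (K + 1), ‖extK x (n + evec ν)‖ ^ 2 ≤ R ^ 2 := by
      have himg : ∑ m ∈ (boxF N (K + 1)).image (fun n => n + evec ν), ‖extK x m‖ ^ 2
          = ∑ n ∈ boxF N (K + 1), ‖extK x (n + evec ν)‖ ^ 2 :=
        Finset.sum_image (fun a _ b _ h => by exact add_right_cancel h)
      rw [← himg, ← hG]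
      exact sum_normsq_le x _
    have h2 : ∑ n ∈ boxF N (K + 1), ‖extK x n‖ ^ 2 ≤ R ^ 2 := by
      rw [← hG]; exact sum_normsq_le x _
    calc ∑ n ∈ boxF N (K + 1), ‖fdiff ν (extK x) n‖ ^ 2
        ≤ ∑ n ∈ boxF N (K + 1),
            (2 * ‖extK x (n + evec ν)‖ ^ 2 + 2 * ‖extK x n‖ ^ 2) :=
          Finset.sum_le_sum hbound
      _ = 2 * ∑ n ∈ boxF N (K + 1), ‖extK x (n + evec ν)‖ ^ 2
          + 2 * ∑ n ∈ boxF N (K + 1), ‖extK x n‖ ^ 2 := by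
          rw [Finset.sum_add_distrib, Finset.mul_sum, Finset.mul_sum]
      _ ≤ 4 * R ^ 2 := by linarith
  calc ∑ ν : Fin N, ∑ n ∈ boxF N (K + 1), ‖fdiff ν (extK x) n‖ ^ 2
      ≤ ∑ _ν : Fin N, 4 * R ^ 2 := Finset.sum_le_sum (fun ν _ => hν ν)
    _ = 4 * N * R ^ 2 := by
      rw [Finset.sum_const, Finset.card_univ, Fintype.card_fin, nsmul_eq_mul]; ring

set_option maxHeartbeats 1000000 in
/-- Constrained minimization problem A.II for the defocusing saturable DNLS:
for `Λ > 4εN` and power `R² < (Λ−4εN)/(4εN)` there is a ground state with a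
frequency `0 < ω < Λ` as Lagrange multiplier. -/
theorem exists_ground_state_defocusing {N K : ℕ} (hN : 0 < N) (hK : 0 < K)
    (ε Λ R : ℝ) (hε : 0 < ε) (hΛ : 4 * ε * N < Λ) (hR : 0 < R)
    (hRbound : R ^ 2 < (Λ - 4 * ε * N) / (4 * ε * N)) :
    ∃ (φ : Zn N → ℂ) (ω : ℝ),
      suppIn K φ ∧
      (∑' n, ‖φ n‖ ^ 2) = R ^ 2 ∧
      (∀ ψ : Zn N → ℂ, suppIn K ψ → (∑' n, ‖ψ n‖ ^ 2) = R ^ 2 →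
        Ham ε Λ φ ≤ Ham ε Λ ψ) ∧
      0 < ω ∧ ω < Λ ∧
      (∀ n : Zn N, inBox K n →
        -(ε : ℂ) * dLap φ n + (ω : ℂ) * φ n
          = (Λ : ℂ) * φ n / ((1 + ‖φ n‖ ^ 2 : ℝ) : ℂ)) := by
  have hNpos : (0 : ℝ) < N := by exact_mod_cast hN
  have h4εN : (0 : ℝ) < 4 * ε * N := by positivity
  have hΛpos : (0 : ℝ) < Λ := lt_trans h4εN hΛ
  have hR2 : (0 : ℝ) < R ^ 2 := by positivity
  obtain ⟨x₀, hG0, hmin⟩ := exists_min (N := N) (K := K) ε Λ R hR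
  obtain ⟨lam, hlam⟩ := exists_lagrange ε Λ R hR x₀ hG0 hmin
  set ω : ℝ := -lam with hωdef
  -- the identity from testing with x₀ itself
  set Kin := ∑ ν : Fin N, ∑ n ∈ boxF N (K + 1), ‖fdiff ν (extK x₀) n‖ ^ 2 with hKin
  set P := ∑ b, ‖x₀ b‖ ^ 2 * (1 + ‖x₀ b‖ ^ 2)⁻¹ with hP
  have hid := hlam x₀
  rw [dF_apply, dG_self, hG0] at hid
  have e1 : (∑ ν : Fin N, ∑ n ∈ boxF N (K + 1),
      2 * ⟪fdiff ν (extK x₀) n, fdiff ν (extK x₀) n⟫) = 2 * Kin := by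
    simp only [real_inner_self_eq_norm_sq, hKin, ← Finset.mul_sum]
  have e2 : (∑ b, (1 + ‖x₀ b‖ ^ 2)⁻¹ * (2 * ⟪x₀ b, x₀ b⟫)) = 2 * P := by
    simp only [real_inner_self_eq_norm_sq, hP]
    rw [Finset.mul_sum]
    exact Finset.sum_congr rfl fun b _ => by ring
  rw [e1, e2] at hid
  have hω_eq : ω * R ^ 2 = Λ * P - ε * Kin := by
    rw [hωdef]; nlinarith [hid]
  -- bounds on Kin and P
  have hKin_nonneg : 0 ≤ Kin := by
    rw [hKin]
    apply Finset.sum_nonneg; intro ν _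
    apply Finset.sum_nonneg; intro n _; positivity
  have hKin_le : Kin ≤ 4 * N * R ^ 2 := kin_le x₀ R hG0
  have hs_le : ∀ b, ‖x₀ b‖ ^ 2 ≤ R ^ 2 := by
    intro b
    rw [← hG0, GK]
    exact Finset.single_le_sum (f := fun b => ‖x₀ b‖ ^ 2)
      (fun b _ => by positivity) (Finset.mem_univ b)
  have h1R2 : (0 : ℝ) < 1 + R ^ 2 := by positivity
  have hP_ge : R ^ 2 / (1 + R ^ 2) ≤ P := by
    have : R ^ 2 / (1 + R ^ 2) = ∑ b, ‖x₀ b‖ ^ 2 * (1 + R ^ 2)⁻¹ := by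
      rw [← Finset.sum_mul, ← GK, hG0, div_eq_mul_inv]
    rw [this, hP]
    apply Finset.sum_le_sum
    intro b _
    apply mul_le_mul_of_nonneg_left _ (by positivity)
    apply inv_anti₀ (by positivity)
    linarith [hs_le b]
  have hP_lt : P < R ^ 2 := by
    rw [← hG0, GK, hP]
    apply Finset.sum_lt_sum
    · intro b _
      apply mul_le_of_le_one_right (by positivity)
      apply inv_le_one_of_one_le₀
      nlinarith [norm_nonneg (x₀ b)]
    · have hex : ∃ b : {n : Zn N // n ∈ boxF N K}, ‖x₀ b‖ ^ 2 ≠ 0 := by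
        by_contra hc
        push_neg at hc
        have h0 : GK x₀ = 0 := Finset.sum_eq_zero (fun b _ => hc b)
        rw [hG0] at h0
        nlinarith
      obtain ⟨b, hb⟩ := hex
      refine ⟨b, Finset.mem_univ b, ?_⟩
      have hbpos : 0 < ‖x₀ b‖ ^ 2 := lt_of_le_of_ne (by positivity) (Ne.symm hb)
      have : (1 + ‖x₀ b‖ ^ 2)⁻¹ < 1 := by
        rw [inv_lt_one₀ (by positivity)]
        linarith
      nlinarith
  -- the frequency bounds
  have hω_pos : 0 < ω := by
    have hb1 : 4 * ε * N * (1 + R ^ 2) < Λ := by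
      have := (lt_div_iff₀ h4εN).mp hRbound
      nlinarith
    have h4 : ε * Kin ≤ ε * (4 * N * R ^ 2) := mul_le_mul_of_nonneg_left hKin_le hε.le
    have h3 : Λ * (R ^ 2 / (1 + R ^ 2)) ≤ Λ * P := mul_le_mul_of_nonneg_left hP_ge hΛpos.le
    have h6 : 0 < Λ * (R ^ 2 / (1 + R ^ 2)) - ε * (4 * N * R ^ 2) := by
      have key : Λ * (R ^ 2 / (1 + R ^ 2)) - ε * (4 * N * R ^ 2)
          = R ^ 2 * (Λ - 4 * ε * N * (1 + R ^ 2)) / (1 + R ^ 2) := by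
        field_simp
      rw [key]
      exact div_pos (mul_pos hR2 (sub_pos.mpr hb1)) h1R2
    nlinarith [hω_eq, h3, h4, h6]
  have hω_lt : ω < Λ := by
    have h7 : Λ * P < Λ * R ^ 2 := mul_lt_mul_of_pos_left hP_lt hΛpos
    have h8 : ω * R ^ 2 < Λ * R ^ 2 := by
      rw [hω_eq]; nlinarith [mul_le_mul_of_nonneg_left hKin_nonneg hε.le]
    exact lt_of_mul_lt_mul_right (by linarith [h8]) hR2.le
  refine ⟨extK x₀, ω, extK_suppIn x₀, ?_, ?_, hω_pos, hω_lt, ?_⟩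
  · rw [tsum_normsq_extK, hG0]
  · intro ψ hψ hψR
    have hrest : extK (N := N) (K := K) (fun b => ψ (b : Zn N)) = ψ :=
      extK_restrict ψ hψ
    have hGψ : GK (fun b : {n : Zn N // n ∈ boxF N K} => ψ (b : Zn N)) = R ^ 2 := by
      rw [← tsum_normsq_extK, hrest, hψR]
    have h1 := hmin (fun b : {n : Zn N // n ∈ boxF N K} => ψ (b : Zn N)) hGψ
    have h2 : Ham ε Λ (extK x₀) = FK ε Λ x₀ := Ham_extK ε Λ x₀
    have h3 : Ham ε Λ ψ
        = FK ε Λ (fun b : {n : Zn N // n ∈ boxF N K} => ψ (b : Zn N)) := by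
      conv_lhs => rw [← hrest]
      exact Ham_extK ε Λ _
    linarith
  · intro n hn
    have h := EL_pointwise ε Λ lam x₀ hlam n (mem_boxF.mpr hn)
    have : ((ω : ℝ) : ℂ) = ((-lam : ℝ) : ℂ) := by rw [hωdef]
    rw [this]
    exact h
end
end

section
/- Let N be a positive integer, ε > 0, and let β, Ω satisfy β > Ω > 0. Fix an integer m ≥ 1, set δ = β − Ω and L(R) = Σ_{j=1}^m (2j+1) R^{2j} + (2m+3) R^{2(m+1)} + 2 R^{2(m+2)}, and let R_* > 0 be the unique positive root of L(R) = δ/β. Then every φ ∈ ℓ²(ℤ^N) with φ ≠ 0 satisfying −ε(Δ_d φ)_n − Ω φ_n = −β φ_n / (1 + |φ_n|²) for all n ∈ ℤ^N has power ‖φ‖₂² ≥ R_*²; equivalently, if φ ∈ ℓ²(ℤ^N) satisfies this equation and ‖φ‖₂ < R_*, then φ = 0. -/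
/-!
At a site `n₀` where `|φ_n|` is maximal (one exists since `φ ∈ ℓ²` and `φ ≠ 0`), every
second difference of the Laplacian points inward, so `Re (Δ_d φ)_{n₀} · conj φ_{n₀} ≤ 0`.
Pairing the stationary equation at `n₀` with `conj φ_{n₀}` then forces
`β / (1 + |φ_{n₀}|²) ≤ Ω`, i.e. `|φ_{n₀}|² ≥ δ/Ω`. On the other hand `R² ≤ L(R)`, so
`R_*² ≤ δ/β < δ/Ω ≤ |φ_{n₀}|² ≤ ‖φ‖₂²`.
-/

open scoped BigOperators
noncomputable section

/-- The polynomial `L(R) = Σ_{j=1}^m (2j+1)R^{2j} + (2m+3)R^{2(m+1)} + 2R^{2(m+2)}`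
arising as local Lipschitz constant of the saturable nonlinearity. -/
def Lpoly (m : ℕ) (R : ℝ) : ℝ :=
  (∑ j ∈ Finset.Icc 1 m, (2 * j + 1 : ℝ) * R ^ (2 * j))
    + (2 * m + 3 : ℝ) * R ^ (2 * (m + 1)) + 2 * R ^ (2 * (m + 2))

open Filter Topology ComplexConjugate

theorem exists_forall_le_of_tendsto_cofinite_zero {α : Type*} {f : α → ℝ}
    (hf : Tendsto f cofinite (𝓝 0)) {a : α} (ha : 0 < f a) : ∃ a₀, ∀ b, f b ≤ f a₀ := by
  have hfin : {b | f a ≤ f b}.Finite := by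
    simpa only [not_lt] using Filter.eventually_cofinite.mp (hf.eventually (eventually_lt_nhds ha))
  obtain ⟨a₀, ha₀, hmax⟩ := Set.exists_max_image _ f hfin ⟨a, le_refl (f a)⟩
  refine ⟨a₀, fun b => ?_⟩
  by_cases hb : f a ≤ f b
  · exact hmax b hb
  · exact (not_le.mp hb).le.trans ha₀

theorem Complex.re_mul_conj_le_norm_sq {a c : ℂ} (h : ‖a‖ ≤ ‖c‖) : (a * conj c).re ≤ ‖c‖ ^ 2 :=
  calc (a * conj c).re ≤ ‖a * conj c‖ := Complex.re_le_norm _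
    _ = ‖a‖ * ‖c‖ := by rw [norm_mul, Complex.norm_conj]
    _ ≤ ‖c‖ ^ 2 := by rw [sq]; exact mul_le_mul_of_nonneg_right h (norm_nonneg c)

theorem re_dLap_mul_conj_nonpos_of_forall_norm_le {N : ℕ} {φ : Zn N → ℂ} {n₀ : Zn N}
    (hmax : ∀ n, ‖φ n‖ ≤ ‖φ n₀‖) : (dLap φ n₀ * conj (φ n₀)).re ≤ 0 := by
  rw [dLap, Finset.sum_mul, Complex.re_sum]
  refine Finset.sum_nonpos fun ν _ => ?_
  have hsplit : (φ (n₀ + evec ν) + φ (n₀ - evec ν) - 2 * φ n₀) * conj (φ n₀)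
      = φ (n₀ + evec ν) * conj (φ n₀) + φ (n₀ - evec ν) * conj (φ n₀)
        - ((2 * ‖φ n₀‖ ^ 2 : ℝ) : ℂ) := by
    push_cast
    rw [← Complex.mul_conj']
    ring
  rw [hsplit, Complex.sub_re, Complex.add_re, Complex.ofReal_re]
  linarith [Complex.re_mul_conj_le_norm_sq (hmax (n₀ + evec ν)),
    Complex.re_mul_conj_le_norm_sq (hmax (n₀ - evec ν))]

theorem le_mul_one_add_norm_sq_of_saturable_eq {ε β Ω : ℝ} {D c : ℂ} (hε : 0 ≤ ε) (hc : c ≠ 0)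
    (hD : (D * conj c).re ≤ 0)
    (heq : -(ε : ℂ) * D - (Ω : ℂ) * c = -(β : ℂ) * c / ((1 + ‖c‖ ^ 2 : ℝ) : ℂ)) :
    β ≤ Ω * (1 + ‖c‖ ^ 2) := by
  have hcc : c * conj c = ((‖c‖ ^ 2 : ℝ) : ℂ) := by rw [Complex.mul_conj', Complex.ofReal_pow]
  have hpaired : β * ‖c‖ ^ 2 / (1 + ‖c‖ ^ 2) = Ω * ‖c‖ ^ 2 + ε * (D * conj c).re := by
    have h := congrArg (fun z => (z * conj c).re) heq
    simp only [sub_mul, mul_assoc, div_mul_eq_mul_div, hcc, Complex.sub_re, ← Complex.ofReal_mul,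
      neg_div, ← Complex.ofReal_div, Complex.ofReal_re, Complex.neg_re, neg_mul,
      Complex.re_ofReal_mul] at h
    linarith
  have hβ : β * ‖c‖ ^ 2 / (1 + ‖c‖ ^ 2) ≤ Ω * ‖c‖ ^ 2 := by
    linarith [mul_nonpos_of_nonneg_of_nonpos hε hD]
  rw [div_le_iff₀ (by positivity)] at hβ
  have hc2 : 0 < ‖c‖ ^ 2 := by positivity
  nlinarith

theorem sq_le_Lpoly (m : ℕ) (R : ℝ) : R ^ 2 ≤ Lpoly m R := by
  have hpow : ∀ j : ℕ, 0 ≤ R ^ (2 * j) := fun j => (even_two_mul j).pow_nonneg R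
  cases m with
  | zero =>
    simp only [Lpoly, Finset.Icc_eq_empty_of_lt zero_lt_one, Finset.sum_empty]
    norm_num
    nlinarith [hpow 1, hpow 2]
  | succ k =>
    have hj1 : (2 * ((1 : ℕ) : ℝ) + 1) * R ^ (2 * 1)
        ≤ ∑ j ∈ Finset.Icc 1 (k + 1), (2 * j + 1 : ℝ) * R ^ (2 * j) :=
      Finset.single_le_sum (f := fun j : ℕ => (2 * j + 1 : ℝ) * R ^ (2 * j))
        (fun j _ => by have := hpow j; positivity) (by simp)
    have hmid : 0 ≤ (2 * ((k + 1 : ℕ) : ℝ) + 3) * R ^ (2 * (k + 1 + 1)) := by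
      have := hpow (k + 1 + 1); positivity
    norm_num at hj1
    unfold Lpoly
    nlinarith [hpow (k + 1 + 2), sq_nonneg R]

theorem power_threshold_saturable_general {N : ℕ}
    (ε β Ω : ℝ) (hε : 0 < ε) (hΩ : 0 < Ω) (hβΩ : Ω < β)
    (m : ℕ)
    (Rs : ℝ) (hroot : Lpoly m Rs = (β - Ω) / β)
    (φ : Zn N → ℂ) (hφ : Summable fun n => ‖φ n‖ ^ 2)
    (heq : ∀ n : Zn N,
      -(ε : ℂ) * dLap φ n - (Ω : ℂ) * φ n
        = -(β : ℂ) * φ n / ((1 + ‖φ n‖ ^ 2 : ℝ) : ℂ))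
    (hne : φ ≠ 0) :
    Rs ^ 2 ≤ ∑' n, ‖φ n‖ ^ 2 := by
  obtain ⟨n₁, hn₁⟩ := Function.ne_iff.mp hne
  obtain ⟨n₀, hmax⟩ := exists_forall_le_of_tendsto_cofinite_zero hφ.tendsto_cofinite_zero
    (pow_pos (norm_pos_iff.mpr hn₁) 2)
  have hmax' : ∀ n, ‖φ n‖ ≤ ‖φ n₀‖ := fun n =>
    (pow_le_pow_iff_left₀ (norm_nonneg _) (norm_nonneg _) two_ne_zero).mp (hmax n)
  have hn₀ : φ n₀ ≠ 0 := fun h =>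
    hn₁ (norm_le_zero_iff.mp ((hmax' n₁).trans_eq (by rw [h, norm_zero])))
  have hβ := le_mul_one_add_norm_sq_of_saturable_eq hε.le hn₀
    (re_dLap_mul_conj_nonpos_of_forall_norm_le hmax') (heq n₀)
  calc Rs ^ 2 ≤ Lpoly m Rs := sq_le_Lpoly m Rs
    _ = (β - Ω) / β := hroot
    _ ≤ (β - Ω) / Ω := div_le_div_of_nonneg_left (sub_nonneg.mpr hβΩ.le) hΩ hβΩ.le
    _ ≤ ‖φ n₀‖ ^ 2 := by rw [div_le_iff₀ hΩ]; linarith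
    _ ≤ ∑' n, ‖φ n‖ ^ 2 := hφ.le_tsum n₀ fun _ _ => sq_nonneg _

/-- Threshold on the power of breather solutions of the focusing saturable DNLS
on the infinite lattice (fixed point argument): any nontrivial solution of the
stationary equation has power at least `R_*²`, where `R_*` is the positive root
of `L(R) = δ/β`, `δ = β − Ω`. -/
theorem power_threshold_saturable {N : ℕ} (hN : 0 < N)
    (ε β Ω : ℝ) (hε : 0 < ε) (hΩ : 0 < Ω) (hβΩ : Ω < β)
    (m : ℕ) (hm : 1 ≤ m)
    (Rs : ℝ) (hRs : 0 < Rs) (hroot : Lpoly m Rs = (β - Ω) / β)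
    (φ : Zn N → ℂ) (hφ : Summable fun n => ‖φ n‖ ^ 2)
    (heq : ∀ n : Zn N,
      -(ε : ℂ) * dLap φ n - (Ω : ℂ) * φ n
        = -(β : ℂ) * φ n / ((1 + ‖φ n‖ ^ 2 : ℝ) : ℂ))
    (hne : φ ≠ 0) :
    Rs ^ 2 ≤ ∑' n, ‖φ n‖ ^ 2 :=
  power_threshold_saturable_general ε β Ω hε hΩ hβΩ m Rs hroot φ hφ heq hne
end
end

section
/- Let N be a positive integer, m ≥ 1 an integer, and R > 0. Define T : ℂ → ℂ by T(z) = |z|^{2(m+1)} z / (1 + |z|²). For all ζ, ξ ∈ ℓ²(ℤ^N) with ‖ζ‖₂ ≤ R and ‖ξ‖₂ ≤ R, one has Σ_{n∈ℤ^N} |T(ζ_n) − T(ξ_n)|² ≤ [ (2m+3) R^{2m+2} + 2 R^{2m+4} ]² Σ_{n∈ℤ^N} |ζ_n − ξ_n|². -/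
/-!
Write `T(z) = g(|z|²) z` with `g(t) = t^{m+1}/(1+t)`. On `[0, R²]` one has `0 ≤ g ≤ R^{2m+2}`
and `0 ≤ g'(t) ≤ (m+1) t^m`, so `g` is `(m+1)R^{2m}`-Lipschitz there. Splitting
`T(z) - T(w) = g(|z|²)(z - w) + (g(|z|²) - g(|w|²)) w` and using `||z|² - |w|²| ≤ 2R|z - w|`
shows that `T` is `(2m+3)R^{2m+2}`-Lipschitz on the disc of radius `R`. Every coordinate of a
point of the `ℓ²` ball of radius `R` lies in that disc, so squaring and summing gives the claim.
-/

open scoped BigOperators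
noncomputable section

/-- The remainder term `T(z) = |z|^{2(m+1)} z / (1+|z|²)` of the order-`m`
Taylor expansion of the saturable nonlinearity. -/
def Trem (m : ℕ) (z : ℂ) : ℂ :=
  ((‖z‖ ^ (2 * (m + 1)) : ℝ) : ℂ) * z / ((1 + ‖z‖ ^ 2 : ℝ) : ℂ)

open Set

lemma abs_sq_norm_sub_sq_norm_le {E : Type*} [SeminormedAddCommGroup E] {R : ℝ} {z w : E}
    (hz : ‖z‖ ≤ R) (hw : ‖w‖ ≤ R) :
    |‖z‖ ^ 2 - ‖w‖ ^ 2| ≤ 2 * R * ‖z - w‖ := by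
  have hsum : ‖z‖ + ‖w‖ ≤ 2 * R := by linarith
  calc |‖z‖ ^ 2 - ‖w‖ ^ 2| = |‖z‖ - ‖w‖| * (‖z‖ + ‖w‖) := by
        rw [show ‖z‖ ^ 2 - ‖w‖ ^ 2 = (‖z‖ - ‖w‖) * (‖z‖ + ‖w‖) by ring, abs_mul,
          abs_of_nonneg (by positivity : 0 ≤ ‖z‖ + ‖w‖)]
    _ ≤ ‖z - w‖ * (2 * R) := by gcongr; exact abs_norm_sub_norm_le z w
    _ = 2 * R * ‖z - w‖ := by ring

lemma norm_smul_sq_norm_sub_le {E : Type*} [SeminormedAddCommGroup E] [NormedSpace ℝ E]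
    {g : ℝ → ℝ} {R A L : ℝ} (hL : 0 ≤ L)
    (hg_bound : ∀ t ∈ Icc 0 (R ^ 2), |g t| ≤ A)
    (hg_lip : ∀ s ∈ Icc 0 (R ^ 2), ∀ t ∈ Icc 0 (R ^ 2), |g s - g t| ≤ L * |s - t|)
    {z w : E} (hz : ‖z‖ ≤ R) (hw : ‖w‖ ≤ R) :
    ‖g (‖z‖ ^ 2) • z - g (‖w‖ ^ 2) • w‖ ≤ (A + 2 * L * R ^ 2) * ‖z - w‖ := by
  have sq_norm_mem {v : E} (hv : ‖v‖ ≤ R) : ‖v‖ ^ 2 ∈ Icc 0 (R ^ 2) :=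
    ⟨by positivity, pow_le_pow_left₀ (norm_nonneg v) hv 2⟩
  have hz' := sq_norm_mem hz
  have hw' := sq_norm_mem hw
  have hsplit : g (‖z‖ ^ 2) • z - g (‖w‖ ^ 2) • w
      = g (‖z‖ ^ 2) • (z - w) + (g (‖z‖ ^ 2) - g (‖w‖ ^ 2)) • w := by
    rw [smul_sub, sub_smul]; abel
  calc ‖g (‖z‖ ^ 2) • z - g (‖w‖ ^ 2) • w‖
      ≤ |g (‖z‖ ^ 2)| * ‖z - w‖ + |g (‖z‖ ^ 2) - g (‖w‖ ^ 2)| * ‖w‖ := by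
        rw [hsplit]
        refine (norm_add_le _ _).trans_eq ?_
        rw [norm_smul, norm_smul, Real.norm_eq_abs, Real.norm_eq_abs]
    _ ≤ A * ‖z - w‖ + (L * (2 * R * ‖z - w‖)) * R := by
        have hdiff : |g (‖z‖ ^ 2) - g (‖w‖ ^ 2)| ≤ L * (2 * R * ‖z - w‖) :=
          (hg_lip _ hz' _ hw').trans
            (mul_le_mul_of_nonneg_left (abs_sq_norm_sub_sq_norm_le hz hw) hL)
        gcongr
        exacts [hg_bound _ hz', (abs_nonneg _).trans hdiff]
    _ = (A + 2 * L * R ^ 2) * ‖z - w‖ := by ring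

def satProfile (m : ℕ) (t : ℝ) : ℝ := t ^ (m + 1) / (1 + t)

lemma Trem_eq_smul (m : ℕ) (z : ℂ) : Trem m z = satProfile m (‖z‖ ^ 2) • z := by
  have h : ((1 + ‖z‖ ^ 2 : ℝ) : ℂ) ≠ 0 := by norm_cast; positivity
  rw [Trem, satProfile, Complex.real_smul, pow_mul]
  push_cast
  field_simp

lemma abs_satProfile_le (m : ℕ) {t : ℝ} (ht : 0 ≤ t) : |satProfile m t| ≤ t ^ (m + 1) := by
  rw [satProfile, abs_of_nonneg (by positivity)]
  exact div_le_self (by positivity) (by linarith)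

lemma hasDerivAt_satProfile (m : ℕ) {t : ℝ} (ht : 1 + t ≠ 0) :
    HasDerivAt (satProfile m) ((m + 1) * t ^ m / (1 + t) - t ^ (m + 1) / (1 + t) ^ 2) t := by
  refine ((hasDerivAt_pow (m + 1) t).div ((hasDerivAt_id t).const_add 1) ht).congr_deriv ?_
  simp only [id, Nat.add_sub_cancel, Nat.cast_add, Nat.cast_one]
  field_simp

lemma abs_deriv_satProfile_le (m : ℕ) {t : ℝ} (ht : 0 ≤ t) :
    |(m + 1) * t ^ m / (1 + t) - t ^ (m + 1) / (1 + t) ^ 2| ≤ (m + 1) * t ^ m := by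
  have h1t : 1 ≤ 1 + t := by linarith
  have hfirst : (m + 1) * t ^ m / (1 + t) ≤ (m + 1) * t ^ m :=
    div_le_self (by positivity) h1t
  -- the subtracted term is the first one times `t / ((m + 1) (1 + t)) ≤ 1`
  have hsecond : t ^ (m + 1) / (1 + t) ^ 2 ≤ (m + 1) * t ^ m / (1 + t) := by
    rw [div_le_div_iff₀ (by positivity) (by positivity), pow_succ]
    have : t * (1 + t) ≤ (m + 1) * (1 + t) ^ 2 := by nlinarith [(m.cast_nonneg : (0 : ℝ) ≤ m)]
    nlinarith [pow_nonneg ht m]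
  exact abs_sub_le_of_nonneg_of_le (by positivity) hfirst (by positivity)
    (hsecond.trans hfirst)

lemma abs_satProfile_sub_le (m : ℕ) {a s t : ℝ} (hs : s ∈ Icc 0 a) (ht : t ∈ Icc 0 a) :
    |satProfile m s - satProfile m t| ≤ (m + 1) * a ^ m * |s - t| := by
  have hderiv : ∀ x ∈ Icc 0 a, HasDerivWithinAt (satProfile m)
      ((m + 1) * x ^ m / (1 + x) - x ^ (m + 1) / (1 + x) ^ 2) (Icc 0 a) x :=
    fun x hx => (hasDerivAt_satProfile m (by linarith [hx.1])).hasDerivWithinAt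
  have hbound : ∀ x ∈ Icc 0 a,
      ‖(m + 1) * x ^ m / (1 + x) - x ^ (m + 1) / (1 + x) ^ 2‖ ≤ (m + 1) * a ^ m := by
    intro x hx
    rw [Real.norm_eq_abs]
    refine (abs_deriv_satProfile_le m hx.1).trans ?_
    gcongr
    exacts [hx.1, hx.2]
  simpa only [Real.norm_eq_abs] using
    (convex_Icc 0 a).norm_image_sub_le_of_norm_hasDerivWithin_le hderiv hbound ht hs

lemma norm_Trem_sub_le (m : ℕ) {R : ℝ} {z w : ℂ} (hz : ‖z‖ ≤ R) (hw : ‖w‖ ≤ R) :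
    ‖Trem m z - Trem m w‖ ≤ (2 * m + 3) * R ^ (2 * m + 2) * ‖z - w‖ := by
  have h := norm_smul_sq_norm_sub_le (g := satProfile m) (A := (R ^ 2) ^ (m + 1))
    (L := (m + 1) * (R ^ 2) ^ m) (by positivity)
    (fun t ht => (abs_satProfile_le m ht.1).trans (pow_le_pow_left₀ ht.1 ht.2 _))
    (fun s hs t ht => abs_satProfile_sub_le m hs ht) hz hw
  rw [Trem_eq_smul, Trem_eq_smul]
  convert h using 2
  ring

lemma norm_le_of_tsum_sq_le {ι E : Type*} [SeminormedAddCommGroup E] {ζ : ι → E} {R : ℝ}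
    (hR : 0 ≤ R) (hζ : Summable fun n => ‖ζ n‖ ^ 2) (hζR : ∑' n, ‖ζ n‖ ^ 2 ≤ R ^ 2) (n : ι) :
    ‖ζ n‖ ≤ R :=
  (sq_le_sq₀ (norm_nonneg _) hR).1 <|
    (hζ.le_tsum n fun _ _ => by positivity).trans hζR

lemma summable_norm_sub_sq {ι E : Type*} [SeminormedAddCommGroup E] {ζ ξ : ι → E}
    (hζ : Summable fun n => ‖ζ n‖ ^ 2) (hξ : Summable fun n => ‖ξ n‖ ^ 2) :
    Summable fun n => ‖ζ n - ξ n‖ ^ 2 := by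
  refine ((hζ.mul_left 2).add (hξ.mul_left 2)).of_nonneg_of_le (fun n => by positivity)
    fun n => ?_
  have h := pow_le_pow_left₀ (norm_nonneg _) (norm_sub_le (ζ n) (ξ n)) 2
  nlinarith [sq_nonneg (‖ζ n‖ - ‖ξ n‖)]

lemma tsum_norm_sub_sq_le {ι E F : Type*} [SeminormedAddCommGroup E] [SeminormedAddCommGroup F]
    {f : E → F} {s : Set E} {K : ℝ} (hf : ∀ z ∈ s, ∀ w ∈ s, ‖f z - f w‖ ≤ K * ‖z - w‖)
    {ζ ξ : ι → E} (hζs : ∀ n, ζ n ∈ s) (hξs : ∀ n, ξ n ∈ s)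
    (hζ : Summable fun n => ‖ζ n‖ ^ 2) (hξ : Summable fun n => ‖ξ n‖ ^ 2) :
    ∑' n, ‖f (ζ n) - f (ξ n)‖ ^ 2 ≤ K ^ 2 * ∑' n, ‖ζ n - ξ n‖ ^ 2 := by
  have hpt (n : ι) : ‖f (ζ n) - f (ξ n)‖ ^ 2 ≤ K ^ 2 * ‖ζ n - ξ n‖ ^ 2 := by
    rw [← mul_pow]
    exact pow_le_pow_left₀ (norm_nonneg _) (hf _ (hζs n) _ (hξs n)) 2
  have hdiff := summable_norm_sub_sq hζ hξ
  rw [← tsum_mul_left]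
  exact Summable.tsum_le_tsum hpt
    ((hdiff.mul_left _).of_nonneg_of_le (fun n => by positivity) hpt) (hdiff.mul_left _)

theorem remainder_lipschitz_on_ball_general {N : ℕ} (m : ℕ)
    (R : ℝ) (hR : 0 < R) (ζ ξ : Zn N → ℂ)
    (hζ : Summable fun n => ‖ζ n‖ ^ 2) (hξ : Summable fun n => ‖ξ n‖ ^ 2)
    (hζR : ∑' n, ‖ζ n‖ ^ 2 ≤ R ^ 2) (hξR : ∑' n, ‖ξ n‖ ^ 2 ≤ R ^ 2) :
    ∑' n, ‖Trem m (ζ n) - Trem m (ξ n)‖ ^ 2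
      ≤ ((2 * m + 3 : ℝ) * R ^ (2 * m + 2) + 2 * R ^ (2 * m + 4)) ^ 2
          * ∑' n, ‖ζ n - ξ n‖ ^ 2 := by
  refine tsum_norm_sub_sq_le (s := {z | ‖z‖ ≤ R}) (fun z hz w hw => ?_)
    (norm_le_of_tsum_sq_le hR.le hζ hζR) (norm_le_of_tsum_sq_le hR.le hξ hξR) hζ hξ
  refine (norm_Trem_sub_le m hz hw).trans ?_
  gcongr
  exact le_add_of_nonneg_right (by positivity)

/-- The remainder term is Lipschitz on the closed ball of radius `R` of
`ℓ²(ℤ^N)` with Lipschitz constant `(2m+3)R^{2m+2} + 2R^{2m+4}`. -/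
theorem remainder_lipschitz_on_ball {N : ℕ} (hN : 0 < N) (m : ℕ) (hm : 1 ≤ m)
    (R : ℝ) (hR : 0 < R) (ζ ξ : Zn N → ℂ)
    (hζ : Summable fun n => ‖ζ n‖ ^ 2) (hξ : Summable fun n => ‖ξ n‖ ^ 2)
    (hζR : ∑' n, ‖ζ n‖ ^ 2 ≤ R ^ 2) (hξR : ∑' n, ‖ξ n‖ ^ 2 ≤ R ^ 2) :
    ∑' n, ‖Trem m (ζ n) - Trem m (ξ n)‖ ^ 2
      ≤ ((2 * m + 3 : ℝ) * R ^ (2 * m + 2) + 2 * R ^ (2 * m + 4)) ^ 2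
          * ∑' n, ‖ζ n - ξ n‖ ^ 2 :=
  remainder_lipschitz_on_ball_general m R hR ζ ξ hζ hξ hζR hξR
end
end

section
/- Let N, K be positive integers, ε > 0, β > 0, σ > 0, and R > 0, and let λ₁ = inf { Σ_{ν=1}^N ‖∇ν⁺φ‖₂² / ‖φ‖₂² : φ ∈ ℓ²(ℤ^N_K), φ ≠ 0 }. Consider on ℓ²(ℤ^N_K) the Hamiltonian H_σ[φ] = ε Σ_{ν=1}^N ‖∇ν⁺φ‖₂² + (β/(σ+1)) Σ_{‖n‖_∞ ≤ K} |φ_n|^{2σ+2}. Then there exist φ* ∈ ℓ²(ℤ^N_K) with Σ_{‖n‖_∞ ≤ K} |φ*_n|² = R² attaining inf { H_σ[φ] : φ ∈ ℓ²(ℤ^N_K), Σ_{‖n‖_∞ ≤ K} |φ_n|² = R² }, and a real number Ω with Ω > ελ₁ > 0, such that −ε(Δ_d φ*)_n + β |φ*_n|^{2σ} φ*_n = Ω φ*_n for all n with ‖n‖_∞ ≤ K (where φ*_n = 0 for ‖n‖_∞ > K). -/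
open scoped BigOperators
noncomputable section

/-- The principal (Dirichlet) eigenvalue of `−Δ_d` on `ℓ²(ℤ^N_K)`, as the
infimum of the Rayleigh quotient. -/
def lam1 (N K : ℕ) : ℝ :=
  sInf { r : ℝ | ∃ φ : Zn N → ℂ, suppIn K φ ∧ φ ≠ 0 ∧
    r = (∑ ν : Fin N, ∑' n, ‖fdiff ν φ n‖ ^ 2) / (∑' n, ‖φ n‖ ^ 2) }

/-- The Hamiltonian `H_σ[φ] = ε Σ_ν ‖∇ν⁺φ‖₂² + (β/(σ+1)) Σ_n |φ_n|^{2σ+2}` of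
the defocusing DNLS with power nonlinearity. -/
def HamSigma {N : ℕ} (ε β σ : ℝ) (φ : Zn N → ℂ) : ℝ :=
  ε * ∑ ν : Fin N, ∑' n, ‖fdiff ν φ n‖ ^ 2
    + (β / (σ + 1)) * ∑' n, ‖φ n‖ ^ (2 * σ + 2)


-- ===== auxiliary development =====
def box (N K : ℕ) : Finset (Zn N) := Fintype.piFinset fun _ => Finset.Icc (-(K:ℤ)) (K:ℤ)

lemma mem_box {N K : ℕ} {n : Zn N} : n ∈ box N K ↔ inBox K n := by
  simp [box, Fintype.mem_piFinset, inBox, abs_le, Finset.mem_Icc]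

abbrev Emod (N K : ℕ) : Type := ↥(box N K) → ℂ

def extend {N K : ℕ} (x : Emod N K) : Zn N → ℂ :=
  fun n => if h : n ∈ box N K then x ⟨n, h⟩ else 0

def extCLM (N K : ℕ) (n : Zn N) : Emod N K →L[ℝ] ℂ :=
  if h : n ∈ box N K then ContinuousLinearMap.proj ⟨n, h⟩ else 0

lemma extend_eq {N K : ℕ} (x : Emod N K) (n : Zn N) : extend x n = extCLM N K n x := by
  unfold extend extCLM; split <;> simp

def Dq (z : ℂ) : ℂ →L[ℝ] ℝ := (2 * z.re) • Complex.reCLM + (2 * z.im) • Complex.imCLM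

lemma Dq_apply (z v : ℂ) : Dq z v = 2 * (z.re * v.re + z.im * v.im) := by
  simp [Dq]; ring

lemma hasStrict_q (z : ℂ) : HasStrictFDerivAt (fun w : ℂ => ‖w‖^2) (Dq z) z := by
  have h : (fun w : ℂ => ‖w‖^2) = fun w : ℂ => w.re*w.re + w.im*w.im := by
    funext w
    rw [Complex.sq_norm, Complex.normSq_apply]
  rw [h]
  have h1 := (Complex.reCLM.hasStrictFDerivAt (x := z)).mul (Complex.reCLM.hasStrictFDerivAt (x := z))
  have h2 := (Complex.imCLM.hasStrictFDerivAt (x := z)).mul (Complex.imCLM.hasStrictFDerivAt (x := z))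
  have := h1.add h2
  refine HasStrictFDerivAt.congr_fderiv this ?_
  ext v
  simp [Dq]
  ring

-- chunk 2
variable {N K : ℕ}

lemma abs_evec_le {ν : Fin N} (i : Fin N) : |evec ν i| ≤ 1 := by
  unfold evec; split <;> simp

lemma extend_support (x : Emod N K) {n : Zn N} (h : n ∉ box N K) : extend x n = 0 := by
  unfold extend; rw [dif_neg h]

lemma fdiff_support_s13 (ν : Fin N) (x : Emod N K) {m : Zn N} (h : m ∉ box N (K+1)) :
    fdiff ν (extend x) m = 0 := by
  rw [mem_box] at h
  simp only [inBox, not_forall, not_le] at h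
  obtain ⟨i, hi⟩ := h
  have h1 : m ∉ box N K := by
    rw [mem_box]; intro hin
    exact absurd (le_trans (hin i) (by push_cast; omega)) (not_le.mpr hi)
  have h2 : m + evec ν ∉ box N K := by
    rw [mem_box]; intro hin
    have : |m i| ≤ |(m + evec ν) i| + |evec ν i| := by
      have : m i = (m + evec ν) i - evec ν i := by simp [Pi.add_apply]
      rw [this]; exact abs_sub (_ : ℤ) _
    have := le_trans this (add_le_add (hin i) (abs_evec_le i))
    push_cast at hi this; omega
  simp [fdiff, extend_support x h1, extend_support x h2]

def Tcl (N K : ℕ) (ν : Fin N) (m : Zn N) : Emod N K →L[ℝ] ℂ :=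
  extCLM N K (m + evec ν) - extCLM N K m

lemma Tcl_apply (ν : Fin N) (m : Zn N) (x : Emod N K) :
    Tcl N K ν m x = fdiff ν (extend x) m := by
  simp [Tcl, fdiff, extend_eq]

def Pfun (N K : ℕ) (x : Emod N K) : ℝ := ∑ n ∈ box N K, ‖extend x n‖^2
def Ffun (N K : ℕ) (ν : Fin N) (x : Emod N K) : ℝ :=
  ∑ m ∈ box N (K+1), ‖fdiff ν (extend x) m‖^2
def Gfun (N K : ℕ) (σ : ℝ) (x : Emod N K) : ℝ :=
  ∑ n ∈ box N K, ‖extend x n‖^(2*σ+2 : ℝ)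
def Hfun (N K : ℕ) (ε β σ : ℝ) (x : Emod N K) : ℝ :=
  ε * ∑ ν : Fin N, Ffun N K ν x + (β/(σ+1)) * Gfun N K σ x

lemma tsum_sq_extend (x : Emod N K) : ∑' n, ‖extend x n‖^2 = Pfun N K x :=
  tsum_eq_sum (fun n hn => by rw [extend_support x hn]; simp)

lemma tsum_fdiff_sq (ν : Fin N) (x : Emod N K) :
    ∑' m, ‖fdiff ν (extend x) m‖^2 = Ffun N K ν x :=
  tsum_eq_sum (fun m hm => by rw [fdiff_support_s13 ν x hm]; simp)

lemma tsum_rpow_extend {σ : ℝ} (hσ : 0 < σ) (x : Emod N K) :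
    ∑' n, ‖extend x n‖^(2*σ+2 : ℝ) = Gfun N K σ x :=
  tsum_eq_sum (fun n hn => by
    rw [extend_support x hn]
    simp only [norm_zero]
    exact Real.zero_rpow (by nlinarith))

lemma HamSigma_extend {ε β σ : ℝ} (hσ : 0 < σ) (x : Emod N K) :
    HamSigma ε β σ (extend x) = Hfun N K ε β σ x := by
  unfold HamSigma Hfun
  rw [tsum_rpow_extend hσ]
  congr 1
  congr 1
  exact Finset.sum_congr rfl fun ν _ => tsum_fdiff_sq ν x

lemma suppIn_extend (x : Emod N K) : suppIn K (extend x) :=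
  fun n hn => extend_support x (fun h => hn (mem_box.mp h))

lemma extend_restrict {φ : Zn N → ℂ} (h : suppIn K φ) :
    extend (fun b : ↥(box N K) => φ ↑b) = φ := by
  funext n
  unfold extend
  split
  · rfl
  · exact (h n (fun hin => ‹n ∉ box N K› (mem_box.mpr hin))).symm

-- chunk 3: derivatives
def rp (z w : ℂ) : ℝ := ((starRingEnd ℂ) z * w).re

lemma rp_def (z w : ℂ) : rp z w = z.re * w.re + z.im * w.im := by
  simp [rp, Complex.mul_re]

lemma Dq_eq (z v : ℂ) : Dq z v = 2 * rp z v := by rw [Dq_apply, rp_def]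

def Pd (N K : ℕ) (x : Emod N K) : Emod N K →L[ℝ] ℝ :=
  ∑ n ∈ box N K, (Dq (extend x n)).comp (extCLM N K n)

lemma hasStrict_P (x : Emod N K) : HasStrictFDerivAt (Pfun N K) (Pd N K x) x := by
  have h : Pfun N K = fun y => ∑ n ∈ box N K, ‖extCLM N K n y‖^2 := by
    funext y; unfold Pfun; simp only [extend_eq]
  rw [h]; unfold Pd; simp only [extend_eq]
  exact HasStrictFDerivAt.fun_sum fun n _ =>
    (hasStrict_q (extCLM N K n x)).comp x (extCLM N K n).hasStrictFDerivAt

def Fd (N K : ℕ) (ν : Fin N) (x : Emod N K) : Emod N K →L[ℝ] ℝ :=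
  ∑ m ∈ box N (K+1), (Dq (fdiff ν (extend x) m)).comp (Tcl N K ν m)

lemma hasStrict_F (ν : Fin N) (x : Emod N K) :
    HasStrictFDerivAt (Ffun N K ν) (Fd N K ν x) x := by
  have h : Ffun N K ν = fun y => ∑ m ∈ box N (K+1), ‖Tcl N K ν m y‖^2 := by
    funext y; unfold Ffun; simp only [Tcl_apply]
  rw [h]; unfold Fd; simp only [← Tcl_apply]
  exact HasStrictFDerivAt.fun_sum fun m _ =>
    (hasStrict_q (Tcl N K ν m x)).comp x (Tcl N K ν m).hasStrictFDerivAt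

def Gd (N K : ℕ) (σ : ℝ) (x : Emod N K) : Emod N K →L[ℝ] ℝ :=
  ∑ n ∈ box N K, ((σ+1) * ((‖extend x n‖^2 : ℝ))^(σ:ℝ)) • ((Dq (extend x n)).comp (extCLM N K n))

lemma rpow_sq_helper (σ a : ℝ) (ha : 0 ≤ a) : ((a^2 : ℝ))^(σ+1 : ℝ) = a^(2*σ+2 : ℝ) := by
  rw [← Real.rpow_natCast a 2, ← Real.rpow_mul ha]
  norm_num
  ring_nf

lemma hasStrict_G {σ : ℝ} (hσ : 0 < σ) (x : Emod N K) :
    HasStrictFDerivAt (Gfun N K σ) (Gd N K σ x) x := by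
  have h : Gfun N K σ = fun y => ∑ n ∈ box N K, ((‖extCLM N K n y‖^2 : ℝ))^(σ+1:ℝ) := by
    funext y; unfold Gfun
    exact Finset.sum_congr rfl fun n _ => by
      rw [extend_eq, rpow_sq_helper _ _ (norm_nonneg _)]
  rw [h]; unfold Gd; simp only [extend_eq]
  apply HasStrictFDerivAt.fun_sum
  intro n _
  have hc := (hasStrict_q (extCLM N K n x)).comp x (extCLM N K n).hasStrictFDerivAt
  have h2 := hc.rpow_const (p := σ+1) (Or.inr (by linarith))
  simpa [smul_smul, add_sub_cancel_right] using h2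

def Hd (N K : ℕ) (ε β σ : ℝ) (x : Emod N K) : Emod N K →L[ℝ] ℝ :=
  ε • (∑ ν : Fin N, Fd N K ν x) + (β/(σ+1)) • Gd N K σ x

lemma hasStrict_H {ε β σ : ℝ} (hσ : 0 < σ) (x : Emod N K) :
    HasStrictFDerivAt (Hfun N K ε β σ) (Hd N K ε β σ x) x := by
  have h1 : HasStrictFDerivAt (fun y => ∑ ν : Fin N, Ffun N K ν y)
      (∑ ν : Fin N, Fd N K ν x) x :=
    HasStrictFDerivAt.fun_sum fun ν _ => hasStrict_F ν x
  exact (h1.const_mul ε).add ((hasStrict_G hσ x).const_mul _)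

lemma Pd_apply (x v : Emod N K) :
    Pd N K x v = 2 * ∑ n ∈ box N K, rp (extend x n) (extend v n) := by
  unfold Pd
  rw [ContinuousLinearMap.sum_apply, Finset.mul_sum]
  exact Finset.sum_congr rfl fun n _ => by
    rw [ContinuousLinearMap.comp_apply, ← extend_eq, Dq_eq]

lemma Fd_apply (ν : Fin N) (x v : Emod N K) :
    Fd N K ν x v = 2 * ∑ m ∈ box N (K+1),
      rp (fdiff ν (extend x) m) (fdiff ν (extend v) m) := by
  unfold Fd
  rw [ContinuousLinearMap.sum_apply, Finset.mul_sum]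
  exact Finset.sum_congr rfl fun m _ => by
    rw [ContinuousLinearMap.comp_apply, Tcl_apply, Dq_eq]

lemma Gd_apply (σ : ℝ) (x v : Emod N K) :
    Gd N K σ x v = ∑ n ∈ box N K,
      (σ+1) * ((‖extend x n‖^2 : ℝ))^(σ:ℝ) * (2 * rp (extend x n) (extend v n)) := by
  unfold Gd
  rw [ContinuousLinearMap.sum_apply]
  exact Finset.sum_congr rfl fun n _ => by
    rw [ContinuousLinearMap.smul_apply, ContinuousLinearMap.comp_apply, ← extend_eq, Dq_eq]
    simp [mul_assoc]

lemma Hd_apply (ε β σ : ℝ) (x v : Emod N K) :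
    Hd N K ε β σ x v = ε * (∑ ν : Fin N, Fd N K ν x v) + (β/(σ+1)) * Gd N K σ x v := by
  unfold Hd
  simp [ContinuousLinearMap.sum_apply]

-- chunk 4
lemma extend_coe (x : Emod N K) (b : ↥(box N K)) : extend x ↑b = x b := by
  unfold extend; rw [dif_pos b.2]

lemma extend_eq_zero_iff {x : Emod N K} : extend x = 0 ↔ x = 0 := by
  constructor
  · intro h; funext b
    have := congrFun h ↑b
    rwa [extend_coe] at this
  · rintro rfl; funext n; unfold extend; split <;> simp

def dvec {N K : ℕ} (b : ↥(box N K)) (c : ℂ) : Emod N K := fun b' => if b' = b then c else 0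

lemma extend_dvec (b : ↥(box N K)) (c : ℂ) (n : Zn N) :
    extend (dvec b c) n = if n = ↑b then c else 0 := by
  unfold extend dvec
  split
  · simp [Subtype.ext_iff]
  · have : n ≠ ↑b := fun h => ‹n ∉ box N K› (h ▸ b.2)
    simp [this]

lemma Pfun_nonneg (x : Emod N K) : 0 ≤ Pfun N K x :=
  Finset.sum_nonneg fun _ _ => sq_nonneg _

lemma Ffun_nonneg (ν : Fin N) (x : Emod N K) : 0 ≤ Ffun N K ν x :=
  Finset.sum_nonneg fun _ _ => sq_nonneg _

lemma sq_le_P (x : Emod N K) (b : ↥(box N K)) : ‖x b‖^2 ≤ Pfun N K x := by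
  have h := Finset.single_le_sum (f := fun n => ‖extend x n‖^2)
    (fun n _ => sq_nonneg _) b.2
  simpa [extend_coe, Pfun] using h

lemma Pfun_dvec (b : ↥(box N K)) (c : ℂ) : Pfun N K (dvec b c) = ‖c‖^2 := by
  unfold Pfun
  have h : ∀ n ∈ box N K, ‖extend (dvec b c) n‖^2 = if n = ↑b then ‖c‖^2 else 0 :=
    fun n _ => by rw [extend_dvec]; split <;> simp
  rw [Finset.sum_congr rfl h, Finset.sum_ite_eq' (box N K) (↑b) (fun _ => ‖c‖^2),
    if_pos b.2]

lemma zero_mem_box : (0 : Zn N) ∈ box N K := by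
  rw [mem_box]; intro i; simp

lemma cont_P : Continuous (Pfun N K) :=
  continuous_iff_continuousAt.mpr fun x => (hasStrict_P x).hasFDerivAt.continuousAt

lemma cont_H {ε β σ : ℝ} (hσ : 0 < σ) : Continuous (Hfun N K ε β σ) :=
  continuous_iff_continuousAt.mpr fun x => (hasStrict_H hσ x).hasFDerivAt.continuousAt

lemma cont_A : Continuous (fun x : Emod N K => ∑ ν : Fin N, Ffun N K ν x) :=
  continuous_finset_sum _ fun ν _ => continuous_iff_continuousAt.mpr
    fun x => (hasStrict_F ν x).hasFDerivAt.continuousAt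

lemma isCompact_sphere' (r : ℝ) : IsCompact {x : Emod N K | Pfun N K x = r^2} := by
  apply Metric.isCompact_of_isClosed_isBounded
  · exact isClosed_singleton.preimage cont_P
  · apply (Metric.isBounded_closedBall (x := (0 : Emod N K)) (r := |r|)).subset
    intro x hx
    simp only [Metric.mem_closedBall, dist_zero_right]
    rw [pi_norm_le_iff_of_nonneg (abs_nonneg r)]
    intro b
    have h1 := sq_le_P x b
    rw [Set.mem_setOf_eq] at hx
    nlinarith [norm_nonneg (x b), abs_nonneg r, sq_abs r]

lemma sphere_nonempty {r : ℝ} (hr : 0 ≤ r) :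
    ({x : Emod N K | Pfun N K x = r^2}).Nonempty := by
  refine ⟨dvec ⟨0, zero_mem_box⟩ (r : ℂ), ?_⟩
  rw [Set.mem_setOf_eq, Pfun_dvec]
  rw [Complex.norm_real, Real.norm_eq_abs, sq_abs]

lemma Pfun_pos {x : Emod N K} (hx : x ≠ 0) : 0 < Pfun N K x := by
  have : ∃ b, x b ≠ 0 := by
    by_contra h
    push_neg at h
    exact hx (funext h)
  obtain ⟨b, hb⟩ := this
  have h1 : 0 < ‖x b‖^2 := pow_pos (norm_pos_iff.mpr hb) 2
  exact lt_of_lt_of_le h1 (sq_le_P x b)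

lemma extend_smul (c : ℝ) (x : Emod N K) : extend (c • x) = c • extend x := by
  funext n; unfold extend; by_cases h : n ∈ box N K <;> simp [h]

lemma Pfun_smul (c : ℝ) (x : Emod N K) : Pfun N K (c • x) = c^2 * Pfun N K x := by
  unfold Pfun
  rw [Finset.mul_sum]
  refine Finset.sum_congr rfl fun n _ => ?_
  rw [extend_smul]
  simp [norm_smul, mul_pow, sq_abs]

lemma Ffun_smul (c : ℝ) (ν : Fin N) (x : Emod N K) :
    Ffun N K ν (c • x) = c^2 * Ffun N K ν x := by
  unfold Ffun
  rw [Finset.mul_sum]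
  refine Finset.sum_congr rfl fun m _ => ?_
  rw [extend_smul]
  have : fdiff ν (c • extend x) m = c • fdiff ν (extend x) m := by
    simp [fdiff, smul_sub]
  rw [this]
  simp [norm_smul, mul_pow, sq_abs]

-- chunk 5

lemma Afun_pos (hN : 0 < N) {x : Emod N K} (hx : x ≠ 0) :
    0 < ∑ ν : Fin N, Ffun N K ν x := by
  rcases (Finset.sum_nonneg fun ν _ => Ffun_nonneg ν x).lt_or_eq with h | h
  · exact h
  exfalso
  have hF : ∀ ν : Fin N, Ffun N K ν x = 0 := by
    intro ν
    have := (Finset.sum_eq_zero_iff_of_nonneg (fun ν _ => Ffun_nonneg ν x)).mp h.symm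
    exact this ν (Finset.mem_univ ν)
  set ν₀ : Fin N := ⟨0, hN⟩
  have hfd : ∀ m : Zn N, fdiff ν₀ (extend x) m = 0 := by
    intro m
    by_cases hm : m ∈ box N (K+1)
    · have h0 := (Finset.sum_eq_zero_iff_of_nonneg
        (fun m (_ : m ∈ box N (K+1)) => sq_nonneg ‖fdiff ν₀ (extend x) m‖)).mp (hF ν₀) m hm
      have := pow_eq_zero_iff (n := 2) (by norm_num) |>.mp h0
      exact norm_eq_zero.mp this
    · exact fdiff_support_s13 ν₀ x hm
  have hstep : ∀ n : Zn N, extend x (n + evec ν₀) = extend x n := by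
    intro n
    have := hfd n
    unfold fdiff at this
    linear_combination (norm := module) this
  have hiter : ∀ (t : ℕ) (n : Zn N), extend x (n + t • evec ν₀) = extend x n := by
    intro t
    induction t with
    | zero => intro n; simp
    | succ t ih =>
      intro n
      have harg : n + (t+1) • evec ν₀ = (n + evec ν₀) + t • evec ν₀ := by
        rw [add_nsmul, one_nsmul]; abel
      rw [harg, ih, hstep]
  have hzero : ∀ n : Zn N, extend x n = 0 := by
    intro n
    set t : ℕ := K + 1 + (n ν₀).natAbs
    have hco : (n + t • evec ν₀) ν₀ = n ν₀ + t := by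
      simp [Pi.add_apply, evec, ν₀]
    have hout : n + t • evec ν₀ ∉ box N K := by
      rw [mem_box]
      intro hin
      have := hin ν₀
      rw [hco, abs_le] at this
      have h2 := this.2
      push_cast [t] at h2
      omega
    rw [← hiter t n, extend_support x hout]
  exact hx (extend_eq_zero_iff.mp (funext hzero))

lemma rset_mem (x : Emod N K) (hx : x ≠ 0) :
    (∑ ν : Fin N, Ffun N K ν x) / (Pfun N K x) ∈
      { r : ℝ | ∃ φ : Zn N → ℂ, suppIn K φ ∧ φ ≠ 0 ∧
        r = (∑ ν : Fin N, ∑' n, ‖fdiff ν φ n‖ ^ 2) / (∑' n, ‖φ n‖ ^ 2) } := by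
  refine ⟨extend x, suppIn_extend x, fun h => hx (extend_eq_zero_iff.mp h), ?_⟩
  rw [tsum_sq_extend]
  congr 1
  exact (Finset.sum_congr rfl fun ν _ => tsum_fdiff_sq ν x).symm

lemma rset_nonneg {r : ℝ} (hr : r ∈ { r : ℝ | ∃ φ : Zn N → ℂ, suppIn K φ ∧ φ ≠ 0 ∧
    r = (∑ ν : Fin N, ∑' n, ‖fdiff ν φ n‖ ^ 2) / (∑' n, ‖φ n‖ ^ 2) }) : 0 ≤ r := by
  obtain ⟨φ, _, _, rfl⟩ := hr
  apply div_nonneg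
  · exact Finset.sum_nonneg fun ν _ => tsum_nonneg fun n => sq_nonneg _
  · exact tsum_nonneg fun n => sq_nonneg _

lemma exists_min_A (hN : 0 < N) : ∃ c : ℝ, 0 < c ∧
    ∀ y : Emod N K, Pfun N K y = 1 → c ≤ ∑ ν : Fin N, Ffun N K ν y := by
  have hne : ({x : Emod N K | Pfun N K x = (1:ℝ)^2}).Nonempty := sphere_nonempty zero_le_one
  obtain ⟨y0, hy0S, hy0min⟩ := (isCompact_sphere' 1).exists_isMinOn hne cont_A.continuousOn
  have hy0 : y0 ≠ 0 := by
    intro h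
    rw [Set.mem_setOf_eq, h] at hy0S
    simp [Pfun, extend] at hy0S
  refine ⟨∑ ν : Fin N, Ffun N K ν y0, Afun_pos hN hy0, fun y hy => ?_⟩
  exact hy0min (by rw [Set.mem_setOf_eq, one_pow]; exact hy)

lemma lam1_lower (hN : 0 < N) : ∃ c : ℝ, 0 < c ∧ c ≤ lam1 N K := by
  obtain ⟨c, hc, hmin⟩ := exists_min_A (K := K) hN
  refine ⟨c, hc, ?_⟩
  apply le_csInf
  · refine ⟨_, rset_mem (dvec ⟨0, zero_mem_box⟩ 1) ?_⟩
    intro h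
    have := congrFun h ⟨0, zero_mem_box⟩
    simp [dvec] at this
  · rintro r ⟨φ, hφs, hφ0, rfl⟩
    set x : Emod N K := fun b => φ ↑b with hxdef
    have hext : extend x = φ := extend_restrict hφs
    have hx0 : x ≠ 0 := fun h => hφ0 (by rw [← hext, h]; exact extend_eq_zero_iff.mpr rfl)
    have hP : 0 < Pfun N K x := Pfun_pos hx0
    set y : Emod N K := (Real.sqrt (Pfun N K x))⁻¹ • x with hydef
    have hsq : ((Real.sqrt (Pfun N K x))⁻¹)^2 = (Pfun N K x)⁻¹ := by
      rw [inv_pow, Real.sq_sqrt hP.le]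
    have hPy : Pfun N K y = 1 := by
      rw [hydef, Pfun_smul, hsq, inv_mul_cancel₀ hP.ne']
    have hAy : ∑ ν : Fin N, Ffun N K ν y =
        (∑ ν : Fin N, Ffun N K ν x) / Pfun N K x := by
      rw [hydef]
      rw [Finset.sum_congr rfl fun ν _ => Ffun_smul _ ν x]
      rw [← Finset.mul_sum, hsq, inv_mul_eq_div]
    have := hmin y hPy
    rw [hAy] at this
    calc c ≤ (∑ ν : Fin N, Ffun N K ν x) / Pfun N K x := this
      _ = _ := by
        rw [← hext, tsum_sq_extend]
        congr 1
        exact (Finset.sum_congr rfl fun ν _ => tsum_fdiff_sq ν x).symm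

-- chunk 6: rp lemmas and evaluations
lemma rp_zero_right (z : ℂ) : rp z 0 = 0 := by simp [rp]
lemma rp_sub_right (z w1 w2 : ℂ) : rp z (w1 - w2) = rp z w1 - rp z w2 := by
  simp [rp, mul_sub]
lemma rp_neg_left (z c : ℂ) : rp (-z) c = -rp z c := by simp [rp]
lemma rp_sum_left {ι : Type*} (s : Finset ι) (f : ι → ℂ) (c : ℂ) :
    rp (∑ i ∈ s, f i) c = ∑ i ∈ s, rp (f i) c := by
  simp [rp, map_sum, Finset.sum_mul, Complex.re_sum]
lemma rp_sub_left (z1 z2 c : ℂ) : rp (z1 - z2) c = rp z1 c - rp z2 c := by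
  simp [rp, sub_mul]
lemma rp_real_mul (r : ℝ) (z c : ℂ) : rp ((r:ℂ) * z) c = r * rp z c := by
  simp [rp, map_mul, Complex.conj_ofReal, mul_assoc]
lemma rp_one_right (z : ℂ) : rp z 1 = z.re := by simp [rp]
lemma rp_I_right (z : ℂ) : rp z Complex.I = z.im := by
  simp [rp, Complex.mul_re]
lemma rp_self (z : ℂ) : rp z z = ‖z‖^2 := by
  rw [rp_def, Complex.sq_norm, Complex.normSq_apply]

lemma rp_eq_zero_iff {z : ℂ} (h1 : rp z 1 = 0) (hI : rp z Complex.I = 0) : z = 0 := by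
  rw [rp_one_right] at h1
  rw [rp_I_right] at hI
  exact Complex.ext h1 hI

lemma box_mono : box N K ⊆ box N (K+1) := by
  intro n hn
  rw [mem_box] at hn ⊢
  intro i
  calc |n i| ≤ (K : ℤ) := hn i
    _ ≤ ((K+1 : ℕ) : ℤ) := by push_cast; omega

lemma sub_evec_mem (b : ↥(box N K)) (ν : Fin N) : (↑b : Zn N) - evec ν ∈ box N (K+1) := by
  have hb := mem_box.mp b.2
  rw [mem_box]
  intro i
  have h1 := hb i
  have h2 : |((↑b : Zn N) - evec ν) i| ≤ |(↑b : Zn N) i| + |evec ν i| := by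
    simpa [Pi.sub_apply] using abs_sub ((↑b : Zn N) i) (evec ν i)
  have := abs_evec_le (ν := ν) i
  push_cast
  omega

lemma sum_rp_dvec (x : Emod N K) (b : ↥(box N K)) (c : ℂ) :
    ∑ n ∈ box N K, rp (extend x n) (extend (dvec b c) n) = rp (extend x ↑b) c := by
  have h : ∀ n ∈ box N K, rp (extend x n) (extend (dvec b c) n)
      = if n = ↑b then rp (extend x n) c else 0 := fun n _ => by
    rw [extend_dvec]; split <;> simp [rp_zero_right]
  rw [Finset.sum_congr rfl h, Finset.sum_ite_eq' (box N K) (↑b : Zn N)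
    (fun n => rp (extend x n) c), if_pos b.2]

lemma Pd_dvec (x : Emod N K) (b : ↥(box N K)) (c : ℂ) :
    Pd N K x (dvec b c) = 2 * rp (extend x ↑b) c := by
  rw [Pd_apply, sum_rp_dvec]

lemma Gd_dvec (σ : ℝ) (x : Emod N K) (b : ↥(box N K)) (c : ℂ) :
    Gd N K σ x (dvec b c)
      = (σ+1) * ((‖extend x ↑b‖^2 : ℝ))^(σ:ℝ) * (2 * rp (extend x ↑b) c) := by
  rw [Gd_apply]
  have h : ∀ n ∈ box N K,
      (σ+1) * ((‖extend x n‖^2 : ℝ))^(σ:ℝ) * (2 * rp (extend x n) (extend (dvec b c) n))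
      = if n = ↑b then (σ+1) * ((‖extend x n‖^2 : ℝ))^(σ:ℝ) * (2 * rp (extend x n) c) else 0 :=
    fun n _ => by rw [extend_dvec]; split <;> simp [rp_zero_right]
  rw [Finset.sum_congr rfl h, Finset.sum_ite_eq' (box N K) (↑b : Zn N), if_pos b.2]

lemma fdiff_dvec (ν : Fin N) (b : ↥(box N K)) (c : ℂ) (m : Zn N) :
    fdiff ν (extend (dvec b c)) m
      = (if m = (↑b : Zn N) - evec ν then c else 0) - (if m = ↑b then c else 0) := by
  unfold fdiff
  rw [extend_dvec, extend_dvec]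
  congr 1
  have : (m + evec ν = ↑b) ↔ (m = (↑b : Zn N) - evec ν) := by
    constructor
    · intro h; rw [← h]; abel
    · intro h; rw [h]; abel
  simp only [this]

lemma Fd_dvec (ν : Fin N) (x : Emod N K) (b : ↥(box N K)) (c : ℂ) :
    Fd N K ν x (dvec b c)
      = 2 * rp (fdiff ν (extend x) ((↑b : Zn N) - evec ν) - fdiff ν (extend x) ↑b) c := by
  rw [Fd_apply]
  congr 1
  have h : ∀ m ∈ box N (K+1),
      rp (fdiff ν (extend x) m) (fdiff ν (extend (dvec b c)) m)
      = (if m = (↑b : Zn N) - evec ν then rp (fdiff ν (extend x) m) c else 0)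
        - (if m = (↑b : Zn N) then rp (fdiff ν (extend x) m) c else 0) := fun m _ => by
    rw [fdiff_dvec, rp_sub_right]
    congr 1 <;> (split <;> simp [rp_zero_right])
  rw [Finset.sum_congr rfl h, Finset.sum_sub_distrib,
    Finset.sum_ite_eq' (box N (K+1)) ((↑b : Zn N) - evec ν),
    Finset.sum_ite_eq' (box N (K+1)) ((↑b : Zn N)),
    if_pos (sub_evec_mem b ν), if_pos (box_mono b.2), ← rp_sub_left]

lemma fdiff_telescope (φ : Zn N → ℂ) (ν : Fin N) (b : Zn N) :
    fdiff ν φ (b - evec ν) - fdiff ν φ b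
      = -(φ (b + evec ν) + φ (b - evec ν) - 2 * φ b) := by
  unfold fdiff
  rw [sub_add_cancel]
  ring


lemma sum_Fd_dvec (x : Emod N K) (b : ↥(box N K)) (c : ℂ) :
    ∑ ν : Fin N, Fd N K ν x (dvec b c) = 2 * rp (-(dLap (extend x) ↑b)) c := by
  rw [Finset.sum_congr rfl fun ν _ => Fd_dvec ν x b c, ← Finset.mul_sum]
  congr 1
  rw [Finset.sum_congr rfl fun ν _ => by
    rw [fdiff_telescope (extend x) ν ↑b, rp_neg_left]]
  have hd : dLap (extend x) ↑b
      = ∑ ν : Fin N, (extend x (↑b + evec ν) + extend x (↑b - evec ν) - 2 * extend x ↑b) := rfl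
  rw [hd, rp_neg_left, rp_sum_left, ← Finset.sum_neg_distrib]

-- evaluations at x itself
lemma Pd_self (x : Emod N K) : Pd N K x x = 2 * Pfun N K x := by
  rw [Pd_apply, Pfun]
  congr 1
  exact Finset.sum_congr rfl fun n _ => rp_self _

lemma Fd_self (ν : Fin N) (x : Emod N K) : Fd N K ν x x = 2 * Ffun N K ν x := by
  rw [Fd_apply, Ffun]
  congr 1
  exact Finset.sum_congr rfl fun m _ => rp_self _

lemma rpow_helper2 {σ : ℝ} (hσ : 0 < σ) (a : ℝ) (ha : 0 ≤ a) :
    ((a^2 : ℝ))^(σ:ℝ) * a^2 = a^(2*σ+2 : ℝ) := by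
  rcases eq_or_lt_of_le ha with h | h
  · rw [← h]
    simp only [ne_eq, OfNat.ofNat_ne_zero, not_false_eq_true, zero_pow]
    rw [Real.zero_rpow hσ.ne', Real.zero_rpow (by nlinarith)]
    ring
  · rw [← Real.rpow_natCast a 2, ← Real.rpow_mul ha, ← Real.rpow_add h]
    norm_num

lemma rpow_helper3 (σ : ℝ) (a : ℝ) (ha : 0 ≤ a) :
    ((a^2 : ℝ))^(σ:ℝ) = a^(2*σ : ℝ) := by
  rw [← Real.rpow_natCast a 2, ← Real.rpow_mul ha]
  norm_num

lemma Gd_self {σ : ℝ} (hσ : 0 < σ) (x : Emod N K) :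
    Gd N K σ x x = (σ+1) * (2 * Gfun N K σ x) := by
  rw [Gd_apply, Gfun, Finset.mul_sum, Finset.mul_sum]
  refine Finset.sum_congr rfl fun n _ => ?_
  rw [rp_self, ← rpow_helper2 hσ _ (norm_nonneg _)]
  ring

lemma Gfun_pos {σ : ℝ} (hσ : 0 < σ) {x : Emod N K} (hx : x ≠ 0) :
    0 < Gfun N K σ x := by
  have : ∃ b, x b ≠ 0 := by
    by_contra h; push_neg at h; exact hx (funext h)
  obtain ⟨b, hb⟩ := this
  apply Finset.sum_pos' (fun n _ => Real.rpow_nonneg (norm_nonneg _) _)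
  refine ⟨↑b, b.2, ?_⟩
  apply Real.rpow_pos_of_pos
  rw [extend_coe]
  exact norm_pos_iff.mpr hb

-- chunk 7

lemma rp_add_left (z1 z2 c : ℂ) : rp (z1 + z2) c = rp z1 c + rp z2 c := by
  simp [rp, add_mul]

lemma rp_Z (eR bR gR ΩR : ℝ) (dz pz c : ℂ) :
    rp ((-(eR:ℂ) * dz + (bR:ℂ) * (gR:ℂ) * pz) - (ΩR:ℂ) * pz) c
      = eR * rp (-dz) c + bR * gR * rp pz c - ΩR * rp pz c := by
  simp only [rp_def, Complex.sub_re, Complex.sub_im, Complex.add_re, Complex.add_im,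
    Complex.mul_re, Complex.mul_im, Complex.neg_re, Complex.neg_im, Complex.ofReal_re,
    Complex.ofReal_im]
  ring


/-- Ground state for the defocusing DNLS with power nonlinearity: for any
`β, R > 0` there is a constrained minimizer of `H_σ` with power `R²`, with a
frequency `Ω > ελ₁ > 0` as Lagrange multiplier. -/
theorem exists_ground_state_power_defocusing {N K : ℕ} (hN : 0 < N) (hK : 0 < K)
    (ε β σ R : ℝ) (hε : 0 < ε) (hβ : 0 < β) (hσ : 0 < σ) (hR : 0 < R) :
    ∃ (φ : Zn N → ℂ) (Ω : ℝ),
      suppIn K φ ∧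
      (∑' n, ‖φ n‖ ^ 2) = R ^ 2 ∧
      (∀ ψ : Zn N → ℂ, suppIn K ψ → (∑' n, ‖ψ n‖ ^ 2) = R ^ 2 →
        HamSigma ε β σ φ ≤ HamSigma ε β σ ψ) ∧
      ε * lam1 N K < Ω ∧ 0 < ε * lam1 N K ∧
      (∀ n : Zn N, inBox K n →
        -(ε : ℂ) * dLap φ n + (β : ℂ) * ((‖φ n‖ ^ (2 * σ) : ℝ) : ℂ) * φ n
          = (Ω : ℂ) * φ n) := by
  have hσ1 : σ + 1 ≠ 0 := by linarith
  have hR2 : (R:ℝ)^2 ≠ 0 := by positivity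
  -- minimizer
  obtain ⟨x₀, hx₀S, hx₀min⟩ := (isCompact_sphere' (N := N) (K := K) R).exists_isMinOn
    (sphere_nonempty hR.le) (cont_H hσ).continuousOn
  rw [Set.mem_setOf_eq] at hx₀S
  have hx₀ne : x₀ ≠ 0 := by
    intro h
    have h0 : extend (0 : Emod N K) = 0 := extend_eq_zero_iff.mpr rfl
    rw [h] at hx₀S
    have : Pfun N K (0 : Emod N K) = 0 := by simp [Pfun, h0]
    rw [this] at hx₀S
    nlinarith
  -- Lagrange multipliers
  have hminOn : IsMinOn (Hfun N K ε β σ) {x : Emod N K | Pfun N K x = Pfun N K x₀} x₀ := by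
    rw [hx₀S]; exact hx₀min
  have hloc : IsLocalExtrOn (Hfun N K ε β σ) {x : Emod N K | Pfun N K x = Pfun N K x₀} x₀ :=
    (hminOn.filter_mono (Filter.le_principal_iff.mpr self_mem_nhdsWithin)).isExtr
  obtain ⟨a, b, hab, hcomb⟩ :=
    hloc.exists_multipliers_of_hasStrictFDerivAt_1d (hasStrict_P x₀) (hasStrict_H hσ x₀)
  have hcomb' : ∀ v, a * Pd N K x₀ v + b * Hd N K ε β σ x₀ v = 0 := fun v => by
    have h := ContinuousLinearMap.ext_iff.mp hcomb v
    simpa using h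
  set A := ∑ ν : Fin N, Ffun N K ν x₀ with hA
  set G := Gfun N K σ x₀ with hGdef
  have hself : a * (2 * R^2) + b * (2 * (ε * A + β * G)) = 0 := by
    have h := hcomb' x₀
    rw [Pd_self, hx₀S, Hd_apply] at h
    rw [Finset.sum_congr rfl fun ν _ => Fd_self ν x₀, ← Finset.mul_sum, ← hA,
      Gd_self hσ x₀, ← hGdef] at h
    calc a * (2 * R^2) + b * (2 * (ε * A + β * G))
        = a * (2 * R ^ 2) + b * (ε * (2 * A) + β / (σ + 1) * ((σ + 1) * (2 * G))) := by
          field_simp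
      _ = 0 := h
  have hbne : b ≠ 0 := by
    intro hb0
    rw [hb0] at hself
    simp at hself
    have ha0 : a = 0 := by
      rcases hself with h | h
      · exact h
      · nlinarith
    exact hab (by simp [ha0, hb0, Prod.ext_iff])
  set Ω : ℝ := (ε * A + β * G) / R^2 with hΩdef
  have hΩR : Ω * R^2 = ε * A + β * G := div_mul_cancel₀ _ hR2
  have ha_eq : a = -(b * Ω) := by
    have key : (a + b * Ω) * (2 * R^2) = 0 := by linear_combination hself + 2*b*hΩR
    rcases mul_eq_zero.mp key with h | h
    · linarith
    · exfalso; nlinarith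
  set φ := extend x₀ with hφdef
  -- Euler-Lagrange
  have hEL : ∀ n : Zn N, inBox K n →
      -(ε : ℂ) * dLap φ n + (β : ℂ) * ((‖φ n‖ ^ (2 * σ) : ℝ) : ℂ) * φ n = (Ω : ℂ) * φ n := by
    intro n hn
    set bb : ↥(box N K) := ⟨n, mem_box.mpr hn⟩ with hbb
    have hcoe : (↑bb : Zn N) = n := rfl
    set g : ℝ := ((‖φ n‖^2 : ℝ))^(σ:ℝ) with hgdef
    have key : ∀ c : ℂ, ε * rp (-(dLap φ n)) c + β * g * rp (φ n) c - Ω * rp (φ n) c = 0 := by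
      intro c
      have h := hcomb' (dvec bb c)
      rw [Pd_dvec, Hd_apply, sum_Fd_dvec, Gd_dvec, ha_eq, hcoe] at h
      rw [← hφdef] at h
      have hfold : (2 * b) * (ε * rp (-(dLap φ n)) c + β * g * rp (φ n) c - Ω * rp (φ n) c)
          = 0 := by
        have hdivmul : β / (σ + 1) * ((σ + 1) * g * (2 * rp (φ n) c))
            = β * g * (2 * rp (φ n) c) := by field_simp
        rw [hdivmul] at h
        linear_combination h
      rcases mul_eq_zero.mp hfold with h2 | h2
      · exfalso; exact hbne (by linarith)
      · exact h2
    rw [← sub_eq_zero]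
    have hg2 : (‖φ n‖ ^ (2 * σ) : ℝ) = g := (rpow_helper3 σ _ (norm_nonneg _)).symm
    rw [hg2]
    apply rp_eq_zero_iff
    · rw [rp_Z]; exact key 1
    · rw [rp_Z]; exact key Complex.I
  -- lam1 facts
  obtain ⟨c₀, hc₀, hc₀le⟩ := lam1_lower (K := K) hN
  have hlam_pos : 0 < lam1 N K := lt_of_lt_of_le hc₀ hc₀le
  have hlam_le : lam1 N K ≤ A / R^2 := by
    have hmem := rset_mem x₀ hx₀ne
    rw [hx₀S] at hmem
    exact csInf_le ⟨0, fun r hr => rset_nonneg hr⟩ hmem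
  have hGpos : 0 < G := Gfun_pos hσ hx₀ne
  have hΩgt : ε * lam1 N K < Ω := by
    have h1 : ε * lam1 N K ≤ ε * (A / R^2) := by
      apply mul_le_mul_of_nonneg_left hlam_le hε.le
    have h2 : ε * (A / R^2) < Ω := by
      rw [hΩdef]
      rw [add_div]
      have : ε * (A/R^2) = ε * A / R^2 := by ring
      rw [this]
      have : 0 < β * G / R^2 := by positivity
      linarith
    linarith
  refine ⟨φ, Ω, suppIn_extend x₀, ?_, ?_, hΩgt, by positivity, hEL⟩
  · rw [hφdef, tsum_sq_extend, hx₀S]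
  · intro ψ hψs hψR
    set y : Emod N K := fun b => ψ ↑b with hy
    have hexty : extend y = ψ := extend_restrict hψs
    have hPy : Pfun N K y = R^2 := by
      rw [← tsum_sq_extend y, hexty]; exact hψR
    have hmin := isMinOn_iff.mp hx₀min y (by rw [Set.mem_setOf_eq]; exact hPy)
    rw [hφdef, HamSigma_extend hσ x₀, ← hexty, HamSigma_extend hσ y]
    exact hmin
end
end

section
/- Let N be a positive integer, ε > 0, Λ > 0, ω > 0 and σ > 0. If φ ∈ ℓ²(ℤ^N), φ ≠ 0, satisfies −ε(Δ_d φ)_n + ω φ_n = Λ |φ_n|^{2σ} φ_n for all n ∈ ℤ^N, then its power satisfies ‖φ‖₂² ≥ [ ω / (Λ(2σ+1)) ]^{1/σ}. Equivalently, if ‖φ‖₂^{2σ} < ω / (Λ(2σ+1)), then φ = 0. -/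
open scoped BigOperators
noncomputable section

/-! At a site `n₀` where `|φ_n|` is maximal (it exists since `φ_n → 0`), every neighbour
satisfies `Re (φ_m / φ_{n₀}) ≤ 1`, so `Re ((Δ_d φ)_{n₀} / φ_{n₀}) ≤ 0`. Dividing the equation
at `n₀` by `φ_{n₀}` and taking real parts gives `ω ≤ Λ ‖φ‖_∞^{2σ}`; the claim follows since
`‖φ‖_∞² ≤ ‖φ‖₂²` and `2σ + 1 ≥ 1`. -/

open Filter Topology

theorem Filter.Tendsto.exists_forall_ge_of_lt {ι β : Type*} [LinearOrder β] [TopologicalSpace β]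
    [OrderTopology β] {f : ι → β} {a : β} (hf : Tendsto f cofinite (𝓝 a)) {i : ι}
    (hi : a < f i) : ∃ i₀, ∀ j, f j ≤ f i₀ := by
  have hfin : {j | f i ≤ f j}.Finite := by
    simpa only [not_lt] using eventually_cofinite.mp (hf.eventually (gt_mem_nhds hi))
  obtain ⟨i₀, hi₀, hmax⟩ := Set.exists_max_image _ f hfin ⟨i, le_refl (f i)⟩
  refine ⟨i₀, fun j => ?_⟩
  by_cases hj : f i ≤ f j
  · exact hmax j hj
  · exact (not_le.mp hj).le.trans hi₀

theorem Complex.re_div_le_one_of_norm_le {a b : ℂ} (h : ‖b‖ ≤ ‖a‖) : (b / a).re ≤ 1 :=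
  calc (b / a).re ≤ ‖b / a‖ := re_le_norm _
    _ = ‖b‖ / ‖a‖ := norm_div b a
    _ ≤ 1 := div_le_one_of_le₀ h (norm_nonneg a)

theorem re_dLap_div_nonpos_of_forall_norm_le {N : ℕ} {φ : Zn N → ℂ} {n₀ : Zn N}
    (hmax : ∀ n, ‖φ n‖ ≤ ‖φ n₀‖) : (dLap φ n₀ / φ n₀).re ≤ 0 := by
  rcases eq_or_ne (φ n₀) 0 with h0 | h0
  · simp [h0]
  rw [dLap, Finset.sum_div, Complex.re_sum]
  refine Finset.sum_nonpos fun ν _ => ?_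
  have hsplit : (φ (n₀ + evec ν) + φ (n₀ - evec ν) - 2 * φ n₀) / φ n₀
      = φ (n₀ + evec ν) / φ n₀ + φ (n₀ - evec ν) / φ n₀ - 2 := by
    field_simp
  rw [hsplit, Complex.sub_re, Complex.add_re]
  linarith [Complex.re_div_le_one_of_norm_le (hmax (n₀ + evec ν)),
    Complex.re_div_le_one_of_norm_le (hmax (n₀ - evec ν)), show (2 : ℂ).re = 2 from rfl]

theorem le_mul_norm_rpow_of_forall_norm_le {N : ℕ} {ε Λ ω σ : ℝ} (hε : 0 ≤ ε)
    {φ : Zn N → ℂ} {n₀ : Zn N} (hmax : ∀ n, ‖φ n‖ ≤ ‖φ n₀‖) (h0 : φ n₀ ≠ 0)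
    (heq : -(ε : ℂ) * dLap φ n₀ + (ω : ℂ) * φ n₀
        = (Λ : ℂ) * ((‖φ n₀‖ ^ (2 * σ) : ℝ) : ℂ) * φ n₀) :
    ω ≤ Λ * ‖φ n₀‖ ^ (2 * σ) := by
  have hdiv : -(ε : ℂ) * (dLap φ n₀ / φ n₀) + ω = ((Λ * ‖φ n₀‖ ^ (2 * σ) : ℝ) : ℂ) := by
    calc -(ε : ℂ) * (dLap φ n₀ / φ n₀) + ω = (-(ε : ℂ) * dLap φ n₀ + ω * φ n₀) / φ n₀ := by
          field_simp
      _ = ((Λ * ‖φ n₀‖ ^ (2 * σ) : ℝ) : ℂ) := by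
          rw [heq, mul_div_cancel_right₀ _ h0, Complex.ofReal_mul]
  have hre := congrArg Complex.re hdiv
  rw [Complex.add_re, ← Complex.ofReal_neg, Complex.re_ofReal_mul, Complex.ofReal_re,
    Complex.ofReal_re] at hre
  nlinarith [re_dLap_div_nonpos_of_forall_norm_le hmax]

theorem power_threshold_focusing_power_general {N : ℕ}
    (ε Λ ω σ : ℝ) (hε : 0 < ε) (hΛ : 0 < Λ) (hω : 0 < ω) (hσ : 0 < σ)
    (φ : Zn N → ℂ) (hφ : Summable fun n => ‖φ n‖ ^ 2) (hne : φ ≠ 0)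
    (heq : ∀ n : Zn N,
      -(ε : ℂ) * dLap φ n + (ω : ℂ) * φ n
        = (Λ : ℂ) * ((‖φ n‖ ^ (2 * σ) : ℝ) : ℂ) * φ n) :
    (ω / (Λ * (2 * σ + 1))) ^ (1 / σ) ≤ ∑' n, ‖φ n‖ ^ 2 := by
  obtain ⟨n₁, hn₁⟩ := Function.ne_iff.mp hne
  obtain ⟨n₀, hmax_sq⟩ := hφ.tendsto_cofinite_zero.exists_forall_ge_of_lt
    (i := n₁) (pow_pos (norm_pos_iff.mpr hn₁) 2)
  have hmax : ∀ n, ‖φ n‖ ≤ ‖φ n₀‖ := fun n =>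
    (pow_le_pow_iff_left₀ (norm_nonneg _) (norm_nonneg _) two_ne_zero).mp (hmax_sq n)
  have h0 : φ n₀ ≠ 0 := norm_pos_iff.mp ((norm_pos_iff.mpr hn₁).trans_le (hmax n₁))
  have hbound := le_mul_norm_rpow_of_forall_norm_le hε.le hmax h0 (heq n₀)
  have hbase : ω / (Λ * (2 * σ + 1)) ≤ (‖φ n₀‖ ^ 2) ^ σ := by
    rw [← Real.rpow_natCast, ← Real.rpow_mul (norm_nonneg _), div_le_iff₀ (by positivity)]
    push_cast
    nlinarith [Real.rpow_nonneg (norm_nonneg (φ n₀)) (2 * σ)]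
  calc (ω / (Λ * (2 * σ + 1))) ^ (1 / σ) ≤ ‖φ n₀‖ ^ 2 := by
        rw [one_div, Real.rpow_inv_le_iff_of_pos (by positivity) (by positivity) hσ]
        exact hbase
    _ ≤ ∑' n, ‖φ n‖ ^ 2 := hφ.le_tsum n₀ fun _ _ => by positivity

/-- Threshold for the power of nontrivial breather solutions
`ψ_n(t) = e^{iωt}φ_n` of the focusing DNLS with power nonlinearity on the
infinite lattice: `‖φ‖₂² ≥ [ω/(Λ(2σ+1))]^{1/σ}`. -/
theorem power_threshold_focusing_power {N : ℕ} (hN : 0 < N)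
    (ε Λ ω σ : ℝ) (hε : 0 < ε) (hΛ : 0 < Λ) (hω : 0 < ω) (hσ : 0 < σ)
    (φ : Zn N → ℂ) (hφ : Summable fun n => ‖φ n‖ ^ 2) (hne : φ ≠ 0)
    (heq : ∀ n : Zn N,
      -(ε : ℂ) * dLap φ n + (ω : ℂ) * φ n
        = (Λ : ℂ) * ((‖φ n‖ ^ (2 * σ) : ℝ) : ℂ) * φ n) :
    (ω / (Λ * (2 * σ + 1))) ^ (1 / σ) ≤ ∑' n, ‖φ n‖ ^ 2 :=
  power_threshold_focusing_power_general ε Λ ω σ hε hΛ hω hσ φ hφ hne heq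
end
end

section
/- Let N, K be positive integers, ε > 0, Λ > 0, ω > 0 and σ > 0, and let λ₁ = inf { Σ_{ν=1}^N ‖∇ν⁺φ‖₂² / ‖φ‖₂² : φ ∈ ℓ²(ℤ^N_K), φ ≠ 0 } be the principal eigenvalue of −Δ_d with Dirichlet boundary conditions. If φ ∈ ℓ²(ℤ^N_K), φ ≠ 0, satisfies −ε(Δ_d φ)_n + ω φ_n = Λ |φ_n|^{2σ} φ_n for all n with ‖n‖_∞ ≤ K (where φ_n = 0 for ‖n‖_∞ > K), then ‖φ‖₂² ≥ [ (ελ₁ + ω) / (Λ(2σ+1)) ]^{1/σ}. -/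
open scoped BigOperators
noncomputable section

/-!
Pairing the stationary equation with `conj φ` and summing by parts gives
`ε ‖∇⁺φ‖² + ω ‖φ‖² = Λ ∑ |φₙ|^(2σ+2)`. The Rayleigh quotient bounds the left side below by
`(ελ₁ + ω) ‖φ‖²`, and `|φₙ|² ≤ ‖φ‖²` bounds the right side above by `Λ ‖φ‖^(2σ) ‖φ‖²`.
Hence `ελ₁ + ω ≤ Λ ‖φ‖^(2σ)`, which beats the claimed threshold by the factor `2σ + 1`.
-/

open Function ComplexConjugate

theorem suppIn.hasFiniteSupport {N K : ℕ} {φ : Zn N → ℂ} (h : suppIn K φ) :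
    φ.HasFiniteSupport := by
  refine (Set.finite_Icc (fun _ => -(K : ℤ)) fun _ => (K : ℤ)).subset fun n hn => ?_
  by_contra hbox
  refine hn (h n fun hK => hbox ⟨fun i => ?_, fun i => ?_⟩) <;> linarith [abs_le.mp (hK i)]

theorem tsum_norm_sq_pos {ι E : Type*} [NormedAddCommGroup E] {φ : ι → E}
    (hφ : φ.HasFiniteSupport) (hne : φ ≠ 0) : 0 < ∑' n, ‖φ n‖ ^ 2 := by
  obtain ⟨m, hm⟩ := Function.ne_iff.mp hne
  exact (summable_of_hasFiniteSupport (by fun_prop (disch := simp))).tsum_pos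
    (fun n => by positivity) m (by positivity)

theorem tsum_secondDiff_mul_conj {G : Type*} [AddCommGroup G] {φ : G → ℂ}
    (hφ : φ.HasFiniteSupport) (e : G) :
    ∑' n, (φ (n + e) + φ (n - e) - 2 * φ n) * conj (φ n)
      = -∑' n, (‖φ (n + e) - φ n‖ : ℂ) ^ 2 := by
  have hshift : ∑' n, (φ (n - e) - φ n) * conj (φ n)
      = ∑' n, (φ n - φ (n + e)) * conj (φ (n + e)) := by
    rw [← (Equiv.addRight e).tsum_eq]
    simp
  calc ∑' n, (φ (n + e) + φ (n - e) - 2 * φ n) * conj (φ n)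
      = ∑' n, ((φ (n + e) - φ n) * conj (φ n) + (φ (n - e) - φ n) * conj (φ n)) :=
        tsum_congr fun n => by ring
    _ = ∑' n, (φ (n + e) - φ n) * conj (φ n) + ∑' n, (φ n - φ (n + e)) * conj (φ (n + e)) := by
        rw [Summable.tsum_add, hshift] <;> refine summable_of_hasFiniteSupport ?_ <;>
          fun_prop (disch := first | simp | exact add_left_injective e | exact sub_left_injective)
    _ = ∑' n, -((φ (n + e) - φ n) * conj (φ (n + e) - φ n)) := by
        rw [← Summable.tsum_add]
        · exact tsum_congr fun n => by simp only [map_sub]; ring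
        all_goals refine summable_of_hasFiniteSupport ?_
        all_goals fun_prop (disch := first | simp | exact add_left_injective e)
    _ = -∑' n, (‖φ (n + e) - φ n‖ : ℂ) ^ 2 := by simp only [Complex.mul_conj', tsum_neg]

theorem tsum_dLap_mul_conj {N : ℕ} {φ : Zn N → ℂ} (hφ : φ.HasFiniteSupport) :
    ∑' n, dLap φ n * conj (φ n) = -∑ ν, ∑' n, (‖fdiff ν φ n‖ : ℂ) ^ 2 := by
  simp only [dLap, Finset.sum_mul, ← Finset.sum_neg_distrib]
  rw [Summable.tsum_finsetSum fun ν _ =>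
    summable_of_hasFiniteSupport (by fun_prop (disch := simp))]
  exact Finset.sum_congr rfl fun ν _ => tsum_secondDiff_mul_conj hφ (evec ν)

theorem stationary_energy_identity {N K : ℕ} {ε Λ ω σ : ℝ} {φ : Zn N → ℂ} (hsupp : suppIn K φ)
    (heq : ∀ n : Zn N, inBox K n →
      -(ε : ℂ) * dLap φ n + (ω : ℂ) * φ n = (Λ : ℂ) * ((‖φ n‖ ^ (2 * σ) : ℝ) : ℂ) * φ n) :
    ε * ∑ ν, ∑' n, ‖fdiff ν φ n‖ ^ 2 + ω * ∑' n, ‖φ n‖ ^ 2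
      = Λ * ∑' n, (‖φ n‖ ^ 2) ^ σ * ‖φ n‖ ^ 2 := by
  have hφ := hsupp.hasFiniteSupport
  have hpair : ∀ n, (-(ε : ℂ) * dLap φ n + ω * φ n) * conj (φ n)
      = ((Λ * ((‖φ n‖ ^ 2) ^ σ * ‖φ n‖ ^ 2) : ℝ) : ℂ) := fun n => by
    by_cases hn : inBox K n
    · rw [heq n hn, mul_assoc, Complex.mul_conj', ← Real.rpow_natCast_mul (norm_nonneg _)]
      push_cast
      ring
    · simp [hsupp n hn]
  apply Complex.ofReal_injective
  calc ((ε * ∑ ν, ∑' n, ‖fdiff ν φ n‖ ^ 2 + ω * ∑' n, ‖φ n‖ ^ 2 : ℝ) : ℂ)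
      = -ε * ∑' n, dLap φ n * conj (φ n) + ω * ∑' n, φ n * conj (φ n) := by
        simp only [tsum_dLap_mul_conj hφ, Complex.mul_conj']
        push_cast
        ring
    _ = ∑' n, (-(ε : ℂ) * dLap φ n + ω * φ n) * conj (φ n) := by
        rw [← tsum_mul_left, ← tsum_mul_left, ← Summable.tsum_add]
        · exact tsum_congr fun n => by ring
        all_goals refine summable_of_hasFiniteSupport ?_
        all_goals fun_prop (disch := simp)
    _ = _ := by rw [tsum_congr hpair, ← Complex.ofReal_tsum, tsum_mul_left]

theorem tsum_rpow_mul_self_le {ι : Type*} {a : ι → ℝ} (ha : ∀ i, 0 ≤ a i) (hs : Summable a)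
    {σ : ℝ} (hσ : 0 ≤ σ) : ∑' i, a i ^ σ * a i ≤ (∑' i, a i) ^ σ * ∑' i, a i := by
  have hle : ∀ i, a i ^ σ * a i ≤ (∑' i, a i) ^ σ * a i := fun i =>
    mul_le_mul_of_nonneg_right
      (Real.rpow_le_rpow (ha i) (hs.le_tsum i fun j _ => ha j) hσ) (ha i)
  rw [← tsum_mul_left]
  exact Summable.tsum_le_tsum hle
    ((hs.mul_left _).of_nonneg_of_le (fun i => by have := ha i; positivity) hle) (hs.mul_left _)

theorem lam1_nonneg (N K : ℕ) : 0 ≤ lam1 N K :=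
  Real.sInf_nonneg (by rintro _ ⟨ψ, -, -, rfl⟩; positivity)

theorem lam1_le_rayleigh {N K : ℕ} {φ : Zn N → ℂ} (hsupp : suppIn K φ) (hne : φ ≠ 0) :
    lam1 N K ≤ (∑ ν, ∑' n, ‖fdiff ν φ n‖ ^ 2) / ∑' n, ‖φ n‖ ^ 2 :=
  csInf_le ⟨0, by rintro _ ⟨ψ, -, -, rfl⟩; positivity⟩ ⟨φ, hsupp, hne, rfl⟩

theorem power_threshold_focusing_power_dirichlet_general {N K : ℕ}
    (ε Λ ω σ : ℝ) (hε : 0 < ε) (hΛ : 0 < Λ) (hω : 0 < ω)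
    (hσ : 0 < σ)
    (φ : Zn N → ℂ) (hsupp : suppIn K φ) (hne : φ ≠ 0)
    (heq : ∀ n : Zn N, inBox K n →
      -(ε : ℂ) * dLap φ n + (ω : ℂ) * φ n
        = (Λ : ℂ) * ((‖φ n‖ ^ (2 * σ) : ℝ) : ℂ) * φ n) :
    ((ε * lam1 N K + ω) / (Λ * (2 * σ + 1))) ^ (1 / σ) ≤ ∑' n, ‖φ n‖ ^ 2 := by
  have hφ := hsupp.hasFiniteSupport
  set M := ∑' n, ‖φ n‖ ^ 2
  have hM : 0 < M := tsum_norm_sq_pos hφ hne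
  have hlam : lam1 N K * M ≤ ∑ ν, ∑' n, ‖fdiff ν φ n‖ ^ 2 :=
    (le_div_iff₀ hM).mp (lam1_le_rayleigh hsupp hne)
  have hnonlin : ∑' n, (‖φ n‖ ^ 2) ^ σ * ‖φ n‖ ^ 2 ≤ M ^ σ * M :=
    tsum_rpow_mul_self_le (fun n => by positivity)
      (summable_of_hasFiniteSupport (by fun_prop (disch := simp))) hσ.le
  have hgap : ε * lam1 N K + ω ≤ Λ * M ^ σ := by
    refine le_of_mul_le_mul_right ?_ hM
    calc (ε * lam1 N K + ω) * M = ε * (lam1 N K * M) + ω * M := by ring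
      _ ≤ ε * ∑ ν, ∑' n, ‖fdiff ν φ n‖ ^ 2 + ω * M := by gcongr
      _ = Λ * ∑' n, (‖φ n‖ ^ 2) ^ σ * ‖φ n‖ ^ 2 := stationary_energy_identity hsupp heq
      _ ≤ Λ * M ^ σ * M := by rw [mul_assoc]; gcongr
  have hnum : 0 ≤ ε * lam1 N K + ω := by have := lam1_nonneg N K; positivity
  rw [one_div, Real.rpow_inv_le_iff_of_pos (by positivity) hM.le hσ]
  calc (ε * lam1 N K + ω) / (Λ * (2 * σ + 1)) ≤ (ε * lam1 N K + ω) / Λ :=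
        div_le_div_of_nonneg_left hnum hΛ (by nlinarith)
    _ ≤ M ^ σ := (div_le_iff₀' hΛ).mpr hgap

/-- Threshold for the power of nontrivial breather solutions of the focusing
DNLS with power nonlinearity on the finite lattice (Dirichlet boundary
conditions): `‖φ‖₂² ≥ [(ελ₁ + ω)/(Λ(2σ+1))]^{1/σ}`. -/
theorem power_threshold_focusing_power_dirichlet {N K : ℕ} (hN : 0 < N)
    (hK : 0 < K) (ε Λ ω σ : ℝ) (hε : 0 < ε) (hΛ : 0 < Λ) (hω : 0 < ω)
    (hσ : 0 < σ)
    (φ : Zn N → ℂ) (hsupp : suppIn K φ) (hne : φ ≠ 0)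
    (heq : ∀ n : Zn N, inBox K n →
      -(ε : ℂ) * dLap φ n + (ω : ℂ) * φ n
        = (Λ : ℂ) * ((‖φ n‖ ^ (2 * σ) : ℝ) : ℂ) * φ n) :
    ((ε * lam1 N K + ω) / (Λ * (2 * σ + 1))) ^ (1 / σ) ≤ ∑' n, ‖φ n‖ ^ 2 :=
  power_threshold_focusing_power_dirichlet_general ε Λ ω σ hε hΛ hω hσ φ hsupp hne heq
end
end
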